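/- arXiv:math/0511355 — 7 statements merged into one kernel-verified Lean document; each statement's English description precedes it below -/
import Mathlib

section
/- Let H : ℝⁿ×ℝᵐ×ℝⁿ×ℝ → ℝ be C¹, let x̃, ψ̃ : [a,b] → ℝⁿ be C¹ and ũ : [a,b] → ℝᵐ be continuous. Suppose that for every C¹ function h₁ : [a,b] → ℝⁿ with h₁(a) = h₁(b) = 0, every continuous h₂ : [a,b] → ℝᵐ and every C¹ function h₃ : [a,b] → ℝⁿ one has ∫ₐᵇ [ (∂H/∂x(x̃(t),ũ(t),ψ̃(t),t) + ψ̃̇(t))·h₁(t) + ∂H/∂u(x̃(t),ũ(t),ψ̃(t),t)·h₂(t) + (∂H/∂ψ(x̃(t),ũ(t),ψ̃(t),t) − x̃̇(t))·h₃(t) ] dt = 0. Then for all t ∈ [a,b]: x̃̇(t) = ∂H/∂ψ(x̃(t),ũ(t),ψ̃(t),t), ψ̃̇(t) = −∂H/∂x(x̃(t),ũ(t),ψ̃(t),t), and ∂H/∂u(x̃(t),ũ(t),ψ̃(t),t) = 0. -/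
open Set Finset MeasureTheory


lemma sq_max_hasDeriv (x : ℝ) :
    HasDerivAt (fun y : ℝ => (max y 0)^2) (2 * max x 0) x := by
  rcases lt_trichotomy x 0 with h | h | h
  · have heq : (fun y : ℝ => (max y 0)^2) =ᶠ[nhds x] fun _ => (0:ℝ) := by
      filter_upwards [eventually_lt_nhds h] with y hy
      simp [max_eq_right hy.le]
    rw [max_eq_right h.le, mul_zero]
    exact (hasDerivAt_const x (0:ℝ)).congr_of_eventuallyEq heq
  · subst h
    rw [max_self, mul_zero]
    rw [hasDerivAt_iff_isLittleO, Asymptotics.isLittleO_iff]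
    intro ε hε
    have hev : ∀ᶠ y in nhds (0:ℝ), |y| ≤ ε :=
      Metric.eventually_nhds_iff.mpr ⟨ε, hε, fun {y} hy => le_of_lt (by simpa [Real.dist_eq] using hy)⟩
    filter_upwards [hev] with y hy
    have h2 : ‖(max y 0)^2 - (max (0:ℝ) 0)^2 - (y - 0) • (0:ℝ)‖ = (max y 0)^2 := by
      rw [smul_zero, sub_zero, max_self]; simp [Real.norm_eq_abs, abs_of_nonneg (sq_nonneg (max y 0))]
    rw [h2]
    calc (max y 0)^2 ≤ y^2 := by
          rcases le_or_gt y 0 with hy0 | hy0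
          · simp [max_eq_right hy0, sq_nonneg]
          · simp [max_eq_left hy0.le]
      _ = |y| * |y| := by rw [abs_mul_abs_self]; ring
      _ ≤ ε * ‖y - 0‖ := by
          rw [sub_zero, Real.norm_eq_abs]
          exact mul_le_mul_of_nonneg_right hy (abs_nonneg y)
  · have heq : (fun y : ℝ => (max y 0)^2) =ᶠ[nhds x] fun y => y^2 := by
      filter_upwards [eventually_gt_nhds h] with y hy
      simp [max_eq_left hy.le]
    rw [max_eq_left h.le]
    have h2 : HasDerivAt (fun y : ℝ => y^2) (2 * x) x := by
      simpa using (hasDerivAt_pow 2 x)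
    exact h2.congr_of_eventuallyEq heq

lemma sq_max_contDiff : ContDiff ℝ 1 (fun y : ℝ => (max y 0)^2) := by
  rw [contDiff_one_iff_deriv]
  refine ⟨fun y => (sq_max_hasDeriv y).differentiableAt, ?_⟩
  have : deriv (fun y : ℝ => (max y 0)^2) = fun y => 2 * max y 0 := by
    funext y; exact (sq_max_hasDeriv y).deriv
  rw [this]
  exact continuous_const.mul (continuous_id.max continuous_const)



lemma fund_lemma (f : ℝ → ℝ) (hf : Continuous f) (a b : ℝ) (hab : a < b)
    (h : ∀ g : ℝ → ℝ, ContDiff ℝ 1 g → g a = 0 → g b = 0 →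
      ∫ t in a..b, f t * g t = 0) :
    ∀ t ∈ Icc a b, f t = 0 := by
  intro t₀ ht₀
  by_contra hne
  -- sign normalization
  set s : ℝ := if 0 < f t₀ then 1 else -1 with hs
  set f₁ : ℝ → ℝ := fun t => s * f t with hf₁
  have hf₁c : Continuous f₁ := continuous_const.mul hf
  have hpos : 0 < f₁ t₀ := by
    rcases lt_trichotomy (f t₀) 0 with h0 | h0 | h0
    · simp only [hf₁, hs, if_neg (not_lt.mpr h0.le)]
      linarith
    · exact absurd h0 hne
    · simp only [hf₁, hs, if_pos h0]; linarith
  have hint : ∀ g : ℝ → ℝ, ContDiff ℝ 1 g → g a = 0 → g b = 0 →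
      ∫ t in a..b, f₁ t * g t = 0 := by
    intro g hg hga hgb
    have : ∫ t in a..b, f₁ t * g t = s * ∫ t in a..b, f t * g t := by
      rw [← intervalIntegral.integral_const_mul]
      congr 1; funext t; simp [hf₁]; ring
    rw [this, h g hg hga hgb, mul_zero]
  -- find a small interval where f₁ > 0
  obtain ⟨δ, hδ, hball⟩ : ∃ δ > 0, ∀ y, |y - t₀| ≤ δ → 0 < f₁ y := by
    have hca : ContinuousAt f₁ t₀ := hf₁c.continuousAt
    obtain ⟨δ, hδ, hd⟩ := Metric.continuousAt_iff.mp hca (f₁ t₀ / 2) (by linarith)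
    refine ⟨δ/2, by linarith, fun y hy => ?_⟩
    have : dist y t₀ < δ := by rw [Real.dist_eq]; linarith
    have := hd this
    rw [Real.dist_eq, abs_sub_lt_iff] at this
    linarith [this.2]
  set c : ℝ := max a (t₀ - δ) with hc
  set d : ℝ := min b (t₀ + δ) with hd
  have hcd : c < d := by
    apply max_lt <;> [skip; skip] <;> apply lt_min
    · exact hab
    · linarith [ht₀.1]
    · linarith [ht₀.2]
    · linarith
  have hac : a ≤ c := le_max_left _ _
  have hdb : d ≤ b := min_le_left _ _
  -- the bump function
  set g : ℝ → ℝ := fun t => (max ((t - c) * (d - t)) 0)^2 with hg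
  have hgC : ContDiff ℝ 1 g := by
    exact sq_max_contDiff.comp ((contDiff_id.sub contDiff_const).mul (contDiff_const.sub contDiff_id))
  have hg_nonneg : ∀ t, 0 ≤ g t := fun t => sq_nonneg _
  have hg_zero : ∀ t, t ≤ c ∨ d ≤ t → g t = 0 := by
    intro t ht
    have : (t - c) * (d - t) ≤ 0 := by
      rcases ht with ht | ht
      · apply mul_nonpos_of_nonpos_of_nonneg <;> nlinarith
      · apply mul_nonpos_of_nonneg_of_nonpos <;> nlinarith
    simp [hg, max_eq_right this]
  have hg_pos : ∀ t, c < t → t < d → 0 < g t := by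
    intro t h1 h2
    have : 0 < (t - c) * (d - t) := mul_pos (by linarith) (by linarith)
    simp [hg, max_eq_left this.le]
    positivity
  have hga : g a = 0 := hg_zero a (Or.inl hac)
  have hgb : g b = 0 := hg_zero b (Or.inr hdb)
  have hzero := hint g hgC hga hgb
  -- split integral
  have hint1 : ∀ (p q : ℝ), IntervalIntegrable (fun t => f₁ t * g t) volume p q :=
    fun p q => (hf₁c.mul hgC.continuous).intervalIntegrable p q
  have hsplit : ∫ t in a..b, f₁ t * g t =
      (∫ t in a..c, f₁ t * g t) + (∫ t in c..d, f₁ t * g t) + (∫ t in d..b, f₁ t * g t) := by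
    rw [intervalIntegral.integral_add_adjacent_intervals (hint1 a c) (hint1 c d),
        intervalIntegral.integral_add_adjacent_intervals (by exact (hint1 a c).trans (hint1 c d)) (hint1 d b)]
  have hz1 : (∫ t in a..c, f₁ t * g t) = 0 := by
    rw [intervalIntegral.integral_congr (g := fun _ => (0:ℝ)) ?_, intervalIntegral.integral_zero]
    intro t ht
    rw [uIcc_of_le hac] at ht
    show f₁ t * g t = 0
    rw [hg_zero t (Or.inl ht.2), mul_zero]
  have hz2 : (∫ t in d..b, f₁ t * g t) = 0 := by
    rw [intervalIntegral.integral_congr (g := fun _ => (0:ℝ)) ?_, intervalIntegral.integral_zero]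
    intro t ht
    rw [uIcc_of_le hdb] at ht
    show f₁ t * g t = 0
    rw [hg_zero t (Or.inr ht.1), mul_zero]
  have hmid : 0 < ∫ t in c..d, f₁ t * g t := by
    apply intervalIntegral.intervalIntegral_pos_of_pos_on (hint1 c d) _ hcd
    intro t ht
    have hcball : 0 < f₁ t := by
      apply hball
      rw [abs_sub_le_iff]
      have h1 : t₀ - δ ≤ c := le_max_right _ _
      have h2 : d ≤ t₀ + δ := min_le_right _ _
      constructor
      · linarith [ht.2]
      · linarith [ht.1]
    exact mul_pos hcball (hg_pos t ht.1 ht.2)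
  rw [hsplit, hz1, hz2] at hzero
  linarith

/-- If the first variation of the augmented functional vanishes for all
variations `(h₁, h₂, h₃)` (with `h₁` C¹ vanishing at the endpoints, `h₂`
continuous, `h₃` C¹), then the triple `(x̃, ũ, ψ̃)` satisfies the control
system, the adjoint system, and the stationary condition of the Pontryagin
Maximum Principle on `[a,b]`. -/
theorem first_variation_implies_pontryagin_conditions
    (n m : ℕ) (a b : ℝ) (hab : a < b)
    (H : (Fin n → ℝ) × (Fin m → ℝ) × (Fin n → ℝ) × ℝ → ℝ)
    (hH : ContDiff ℝ 1 H)
    (x ψ : ℝ → (Fin n → ℝ)) (u : ℝ → (Fin m → ℝ))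
    (hx : ContDiff ℝ 1 x) (hψ : ContDiff ℝ 1 ψ) (hu : Continuous u)
    (hvar : ∀ h₁ : ℝ → (Fin n → ℝ), ContDiff ℝ 1 h₁ → h₁ a = 0 → h₁ b = 0 →
      ∀ h₂ : ℝ → (Fin m → ℝ), Continuous h₂ →
      ∀ h₃ : ℝ → (Fin n → ℝ), ContDiff ℝ 1 h₃ →
      ∫ t in a..b,
        ( ∑ i, (fderiv ℝ H (x t, u t, ψ t, t) (Pi.single i 1, 0, 0, 0)
                  + deriv ψ t i) * h₁ t i
        + ∑ j, fderiv ℝ H (x t, u t, ψ t, t) (0, Pi.single j 1, 0, 0) * h₂ t j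
        + ∑ i, (fderiv ℝ H (x t, u t, ψ t, t) (0, 0, Pi.single i 1, 0)
                  - deriv x t i) * h₃ t i ) = 0) :
    ∀ t ∈ Icc a b,
      (∀ i, deriv x t i = fderiv ℝ H (x t, u t, ψ t, t) (0, 0, Pi.single i 1, 0)) ∧
      (∀ i, deriv ψ t i = - fderiv ℝ H (x t, u t, ψ t, t) (Pi.single i 1, 0, 0, 0)) ∧
      (∀ j, fderiv ℝ H (x t, u t, ψ t, t) (0, Pi.single j 1, 0, 0) = 0) := by
  classical
  -- continuity facts
  have hzc : Continuous (fun t : ℝ => (x t, u t, ψ t, t)) :=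
    (hx.continuous).prodMk (hu.prodMk ((hψ.continuous).prodMk continuous_id))
  have hΦ : Continuous (fun t : ℝ => fderiv ℝ H (x t, u t, ψ t, t)) :=
    (hH.continuous_fderiv one_ne_zero).comp hzc
  have hEv : ∀ v, Continuous (fun t : ℝ => fderiv ℝ H (x t, u t, ψ t, t) v) :=
    fun v => hΦ.clm_apply continuous_const
  have hdx : Continuous (deriv x) := hx.continuous_deriv le_rfl
  have hdψ : Continuous (deriv ψ) := hψ.continuous_deriv le_rfl
  -- single-component test function is C¹
  have hsingle : ∀ (k : ℕ) (i : Fin k) (g : ℝ → ℝ), ContDiff ℝ 1 g →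
      ContDiff ℝ 1 (fun t => (Pi.single i (g t) : Fin k → ℝ)) := by
    intro k i g hg
    apply contDiff_pi.mpr
    intro j
    by_cases h : j = i
    · subst h; simpa [Pi.single_apply] using hg
    · simp only [Pi.single_apply, if_neg h]; exact contDiff_const
  have hsingle_cont : ∀ (k : ℕ) (i : Fin k) (g : ℝ → ℝ), Continuous g →
      Continuous (fun t => (Pi.single i (g t) : Fin k → ℝ)) := by
    intro k i g hg
    apply continuous_pi
    intro j
    by_cases h : j = i
    · subst h; simpa [Pi.single_apply] using hg
    · simp only [Pi.single_apply, if_neg h]; exact continuous_const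
  -- the three families of coefficient functions
  set A : Fin n → ℝ → ℝ := fun i t =>
    fderiv ℝ H (x t, u t, ψ t, t) (Pi.single i 1, 0, 0, 0) + deriv ψ t i with hA
  set B : Fin m → ℝ → ℝ := fun j t =>
    fderiv ℝ H (x t, u t, ψ t, t) (0, Pi.single j 1, 0, 0) with hB
  set C : Fin n → ℝ → ℝ := fun i t =>
    fderiv ℝ H (x t, u t, ψ t, t) (0, 0, Pi.single i 1, 0) - deriv x t i with hC
  have hAc : ∀ i, Continuous (A i) :=
    fun i => (hEv _).add ((continuous_apply i).comp hdψ)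
  have hBc : ∀ j, Continuous (B j) := fun j => hEv _
  have hCc : ∀ i, Continuous (C i) :=
    fun i => (hEv _).sub ((continuous_apply i).comp hdx)
  -- A vanishes
  have hAzero : ∀ i, ∀ t ∈ Icc a b, A i t = 0 := by
    intro i
    apply fund_lemma _ (hAc i) _ _ hab
    intro g hg hga hgb
    have := hvar (fun t => Pi.single i (g t)) (hsingle n i g hg)
      (by show (Pi.single i (g a) : Fin n → ℝ) = 0; rw [hga]; simp)
      (by show (Pi.single i (g b) : Fin n → ℝ) = 0; rw [hgb]; simp)
      (fun _ => 0) continuous_const (fun _ => 0) contDiff_const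
    rw [← this]
    apply intervalIntegral.integral_congr
    intro t _
    simp only [hA, Pi.zero_apply, mul_zero, Finset.sum_const_zero, add_zero, zero_add]
    rw [Finset.sum_eq_single i (fun j _ hj => by rw [Pi.single_eq_of_ne hj, mul_zero])
      (fun h => absurd (Finset.mem_univ i) h), Pi.single_eq_same]
  -- B vanishes
  have hBzero : ∀ j, ∀ t ∈ Icc a b, B j t = 0 := by
    intro j
    apply fund_lemma _ (hBc j) _ _ hab
    intro g hg hga hgb
    have := hvar (fun _ => 0) contDiff_const rfl rfl
      (fun t => Pi.single j (g t)) (hsingle_cont m j g hg.continuous)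
      (fun _ => 0) contDiff_const
    rw [← this]
    apply intervalIntegral.integral_congr
    intro t _
    simp only [hB, Pi.zero_apply, mul_zero, Finset.sum_const_zero, add_zero, zero_add]
    rw [Finset.sum_eq_single j (fun j' _ hj => by rw [Pi.single_eq_of_ne hj, mul_zero])
      (fun h => absurd (Finset.mem_univ j) h), Pi.single_eq_same]
  -- C vanishes
  have hCzero : ∀ i, ∀ t ∈ Icc a b, C i t = 0 := by
    intro i
    apply fund_lemma _ (hCc i) _ _ hab
    intro g hg hga hgb
    have := hvar (fun _ => 0) contDiff_const rfl rfl
      (fun _ => 0) continuous_const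
      (fun t => Pi.single i (g t)) (hsingle n i g hg)
    rw [← this]
    apply intervalIntegral.integral_congr
    intro t _
    simp only [hC, Pi.zero_apply, mul_zero, Finset.sum_const_zero, add_zero, zero_add]
    rw [Finset.sum_eq_single i (fun j _ hj => by rw [Pi.single_eq_of_ne hj, mul_zero])
      (fun h => absurd (Finset.mem_univ i) h), Pi.single_eq_same]
  intro t ht
  refine ⟨fun i => ?_, fun i => ?_, fun j => ?_⟩
  · have := hCzero i t ht; simp only [hC] at this; linarith
  · have := hAzero i t ht; simp only [hA] at this; linarith
  · exact hBzero j t ht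
end

section
/- Let F₁, …, F_n : ℝⁿ×ℝⁿ×ℝ → ℝ be smooth functions whose Poisson brackets satisfy {F_i,F_j} = Σ_{s=1}^n ξ^{ij}_s F_s for all i < j in {1,…,n}, with constant vectors ξ^{ij} ∈ ℝⁿ. If ξ^{ab}_i ξ^{pq}_j = ξ^{pq}_i ξ^{ab}_j for all indices with a < b, p < q, a < p and i < j, then the real vector space L of linear combinations Σ_s c_s F_s (c_s ∈ ℝ), equipped with the Poisson bracket, is a solvable Lie algebra; in fact its derived series terminates at the second step: [[L,L],[L,L]] = 0, i.e. the Poisson bracket of any two elements of [L,L] vanishes identically. -/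
open Finset

/-- Canonical Poisson bracket of two time-dependent functions of
`(x, ψ, t) ∈ ℝⁿ × ℝⁿ × ℝ`, taken pointwise in `t`. -/
noncomputable def poissonBracketT {n : ℕ}
    (f g : (Fin n → ℝ) × (Fin n → ℝ) × ℝ → ℝ)
    (p : (Fin n → ℝ) × (Fin n → ℝ) × ℝ) : ℝ :=
  ∑ i, (fderiv ℝ f p (0, Pi.single i 1, 0) * fderiv ℝ g p (Pi.single i 1, 0, 0)
      - fderiv ℝ f p (Pi.single i 1, 0, 0) * fderiv ℝ g p (0, Pi.single i 1, 0))

namespace PBAux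

abbrev E (n : ℕ) := (Fin n → ℝ) × (Fin n → ℝ) × ℝ

variable {n : ℕ}

def ex (i : Fin n) : E n := (Pi.single i 1, 0, 0)
def eψ (i : Fin n) : E n := (0, Pi.single i 1, 0)

lemma pb_def (f g : E n → ℝ) (p : E n) :
    poissonBracketT f g p = ∑ i, (fderiv ℝ f p (eψ i) * fderiv ℝ g p (ex i)
      - fderiv ℝ f p (ex i) * fderiv ℝ g p (eψ i)) := rfl

lemma pb_self (f : E n → ℝ) (p : E n) : poissonBracketT f f p = 0 := by
  rw [pb_def]
  apply Finset.sum_eq_zero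
  intro i _
  ring

lemma pb_antisymm (f g : E n → ℝ) (p : E n) :
    poissonBracketT g f p = -poissonBracketT f g p := by
  rw [pb_def, pb_def, ← Finset.sum_neg_distrib]
  apply Finset.sum_congr rfl
  intro i _
  ring

lemma pb_zero_right (f : E n → ℝ) (p : E n) :
    poissonBracketT f (fun _ => (0:ℝ)) p = 0 := by
  rw [pb_def]
  apply Finset.sum_eq_zero
  intro i _
  simp [fderiv_const]

lemma fderiv_sum_mul {ι : Type*} [Fintype ι] (c : ι → ℝ) (G : ι → E n → ℝ) (p : E n)
    (hG : ∀ i, DifferentiableAt ℝ (G i) p) :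
    fderiv ℝ (fun x => ∑ i, c i * G i x) p = ∑ i, c i • fderiv ℝ (G i) p :=
  (HasFDerivAt.fun_sum (fun i _ => ((hG i).hasFDerivAt.const_mul (c i)))).fderiv

lemma pb_sum_right {ι : Type*} [Fintype ι] (f : E n → ℝ) (c : ι → ℝ) (G : ι → E n → ℝ)
    (p : E n) (hG : ∀ i, DifferentiableAt ℝ (G i) p) :
    poissonBracketT f (fun x => ∑ i, c i * G i x) p
      = ∑ i, c i * poissonBracketT f (G i) p := by
  simp only [pb_def, fderiv_sum_mul c G p hG, ContinuousLinearMap.sum_apply,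
    ContinuousLinearMap.smul_apply, smul_eq_mul]
  simp only [Finset.mul_sum, ← Finset.sum_sub_distrib]
  rw [Finset.sum_comm]
  exact Finset.sum_congr rfl fun i _ => Finset.sum_congr rfl fun k _ => by ring


lemma pb_sum_left {ι : Type*} [Fintype ι] (c : ι → ℝ) (G : ι → E n → ℝ) (g : E n → ℝ)
    (p : E n) (hG : ∀ i, DifferentiableAt ℝ (G i) p) :
    poissonBracketT (fun x => ∑ i, c i * G i x) g p
      = ∑ i, c i * poissonBracketT (G i) g p := by
  rw [pb_antisymm g, pb_sum_right g c G p hG, ← Finset.sum_neg_distrib]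
  exact Finset.sum_congr rfl fun i _ => by rw [pb_antisymm g (G i) p]; ring

lemma pb_const_mul_right (f g : E n → ℝ) (c : ℝ) (p : E n)
    (hg : DifferentiableAt ℝ g p) :
    poissonBracketT f (fun x => c * g x) p = c * poissonBracketT f g p := by
  simp only [pb_def, fderiv_const_mul hg c, ContinuousLinearMap.smul_apply, smul_eq_mul,
    Finset.mul_sum]
  exact Finset.sum_congr rfl fun i _ => by ring

lemma hasFDerivAt_dirDeriv (f : E n → ℝ) (hf : ContDiff ℝ (⊤ : ℕ∞) f) (v : E n) (p : E n) :
    HasFDerivAt (fun y => fderiv ℝ f y v)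
      ((ContinuousLinearMap.apply ℝ ℝ v).comp (fderiv ℝ (fderiv ℝ f) p)) p := by
  have h1 : ContDiff ℝ (⊤ : ℕ∞) (fderiv ℝ f) := hf.fderiv_right (by simp)
  have h2 : HasFDerivAt (fderiv ℝ f) (fderiv ℝ (fderiv ℝ f) p) p :=
    ((h1.differentiable (by simp)) p).hasFDerivAt
  exact ((ContinuousLinearMap.apply ℝ ℝ v).hasFDerivAt).comp p h2

lemma fderiv_pb_apply (f g : E n → ℝ) (hf : ContDiff ℝ (⊤ : ℕ∞) f) (hg : ContDiff ℝ (⊤ : ℕ∞) g)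
    (p : E n) (v : E n) :
    fderiv ℝ (poissonBracketT f g) p v
      = ∑ i, (fderiv ℝ (fderiv ℝ f) p v (eψ i) * fderiv ℝ g p (ex i)
            + fderiv ℝ f p (eψ i) * fderiv ℝ (fderiv ℝ g) p v (ex i)
            - (fderiv ℝ (fderiv ℝ f) p v (ex i) * fderiv ℝ g p (eψ i)
            + fderiv ℝ f p (ex i) * fderiv ℝ (fderiv ℝ g) p v (eψ i))) := by
  have H : HasFDerivAt (poissonBracketT f g)
      (∑ i, (fderiv ℝ f p (eψ i) • ((ContinuousLinearMap.apply ℝ ℝ (ex i)).comp (fderiv ℝ (fderiv ℝ g) p))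
           + fderiv ℝ g p (ex i) • ((ContinuousLinearMap.apply ℝ ℝ (eψ i)).comp (fderiv ℝ (fderiv ℝ f) p))
           - (fderiv ℝ f p (ex i) • ((ContinuousLinearMap.apply ℝ ℝ (eψ i)).comp (fderiv ℝ (fderiv ℝ g) p))
           + fderiv ℝ g p (eψ i) • ((ContinuousLinearMap.apply ℝ ℝ (ex i)).comp (fderiv ℝ (fderiv ℝ f) p))))) p := by
    show HasFDerivAt (fun y => ∑ i, (fderiv ℝ f y (eψ i) * fderiv ℝ g y (ex i)
      - fderiv ℝ f y (ex i) * fderiv ℝ g y (eψ i))) _ p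
    exact HasFDerivAt.fun_sum fun i _ =>
      ((hasFDerivAt_dirDeriv f hf (eψ i) p).mul (hasFDerivAt_dirDeriv g hg (ex i) p)).sub
      ((hasFDerivAt_dirDeriv f hf (ex i) p).mul (hasFDerivAt_dirDeriv g hg (eψ i) p))
  rw [H.fderiv]
  simp only [ContinuousLinearMap.sum_apply, ContinuousLinearMap.sub_apply,
    ContinuousLinearMap.add_apply, ContinuousLinearMap.smul_apply, smul_eq_mul,
    ContinuousLinearMap.comp_apply, ContinuousLinearMap.apply_apply]
  exact Finset.sum_congr rfl fun i _ => by ring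

lemma sum_cancel {ι : Type*} [Fintype ι] (Φ : ι → ι → ℝ) (hΦ : ∀ i j, Φ i j + Φ j i = 0) :
    ∑ i, ∑ j, Φ i j = 0 := by
  have h1 : ((∑ i, ∑ j, Φ i j) + ∑ i, ∑ j, Φ j i) = 0 := by
    simp only [← Finset.sum_add_distrib]
    exact Finset.sum_eq_zero fun i _ => Finset.sum_eq_zero fun j _ => hΦ i j
  have h2 : (∑ i, ∑ j, Φ j i) = ∑ i, ∑ j, Φ i j := Finset.sum_comm
  linarith

lemma jacobi (f g h : E n → ℝ) (hf : ContDiff ℝ (⊤ : ℕ∞) f) (hg : ContDiff ℝ (⊤ : ℕ∞) g)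
    (hh : ContDiff ℝ (⊤ : ℕ∞) h) (p : E n) :
    poissonBracketT f (poissonBracketT g h) p + poissonBracketT g (poissonBracketT h f) p
      + poissonBracketT h (poissonBracketT f g) p = 0 := by
  have Sf : ∀ v w, fderiv ℝ (fderiv ℝ f) p v w = fderiv ℝ (fderiv ℝ f) p w v :=
    fun v w => (hf.contDiffAt.isSymmSndFDerivAt (by rw [minSmoothness_of_isRCLikeNormedField]; exact WithTop.coe_le_coe.mpr le_top)).eq v w
  have Sg : ∀ v w, fderiv ℝ (fderiv ℝ g) p v w = fderiv ℝ (fderiv ℝ g) p w v :=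
    fun v w => (hg.contDiffAt.isSymmSndFDerivAt (by rw [minSmoothness_of_isRCLikeNormedField]; exact WithTop.coe_le_coe.mpr le_top)).eq v w
  have Sh : ∀ v w, fderiv ℝ (fderiv ℝ h) p v w = fderiv ℝ (fderiv ℝ h) p w v :=
    fun v w => (hh.contDiffAt.isSymmSndFDerivAt (by rw [minSmoothness_of_isRCLikeNormedField]; exact WithTop.coe_le_coe.mpr le_top)).eq v w
  simp only [pb_def]
  simp only [fderiv_pb_apply g h hg hh p, fderiv_pb_apply h f hh hf p,
    fderiv_pb_apply f g hf hg p]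
  simp only [Finset.mul_sum, ← Finset.sum_sub_distrib, ← Finset.sum_add_distrib]
  apply sum_cancel
  intro i j
  rw [Sf (ex j) (ex i), Sf (ex j) (eψ i), Sf (eψ j) (ex i), Sf (eψ j) (eψ i),
      Sg (ex j) (ex i), Sg (ex j) (eψ i), Sg (eψ j) (ex i), Sg (eψ j) (eψ i),
      Sh (ex j) (ex i), Sh (ex j) (eψ i), Sh (eψ j) (ex i), Sh (eψ j) (eψ i)]
  ring


section Algebra

variable {n : ℕ} (F : Fin n → E n → ℝ)

noncomputable def Q (c d : Fin n → ℝ) (p : E n) : ℝ :=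
  ∑ i, ∑ j, c i * d j * poissonBracketT (F i) (F j) p

lemma sum_rot {ι κ ν : Type*} [Fintype ι] [Fintype κ] [Fintype ν] (A : ι → κ → ν → ℝ) :
    ∑ i, ∑ j, ∑ k, A i j k = ∑ k, ∑ i, ∑ j, A i j k :=
  (Finset.sum_congr rfl fun _ _ => Finset.sum_comm).trans Finset.sum_comm

lemma Q_sum_left {ι : Type*} [Fintype ι] (μ : ι → ℝ) (e : ι → Fin n → ℝ) (d : Fin n → ℝ)
    (p : E n) :
    Q F (fun s => ∑ k, μ k * e k s) d p = ∑ k, μ k * Q F (e k) d p := by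
  unfold Q
  calc ∑ i, ∑ j, (∑ k, μ k * e k i) * d j * poissonBracketT (F i) (F j) p
      = ∑ i, ∑ j, ∑ k, μ k * (e k i * d j * poissonBracketT (F i) (F j) p) := by
        refine Finset.sum_congr rfl fun i _ => Finset.sum_congr rfl fun j _ => ?_
        rw [Finset.sum_mul, Finset.sum_mul]
        exact Finset.sum_congr rfl fun k _ => by ring
    _ = ∑ k, ∑ i, ∑ j, μ k * (e k i * d j * poissonBracketT (F i) (F j) p) := sum_rot _
    _ = ∑ k, μ k * ∑ i, ∑ j, e k i * d j * poissonBracketT (F i) (F j) p := by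
        refine Finset.sum_congr rfl fun k _ => ?_
        rw [Finset.mul_sum]
        exact Finset.sum_congr rfl fun i _ => by rw [Finset.mul_sum]

lemma Q_sum_right {ι : Type*} [Fintype ι] (ν : ι → ℝ) (e : ι → Fin n → ℝ) (c : Fin n → ℝ)
    (p : E n) :
    Q F c (fun s => ∑ k, ν k * e k s) p = ∑ k, ν k * Q F c (e k) p := by
  unfold Q
  calc ∑ i, ∑ j, c i * (∑ k, ν k * e k j) * poissonBracketT (F i) (F j) p
      = ∑ i, ∑ j, ∑ k, ν k * (c i * e k j * poissonBracketT (F i) (F j) p) := by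
        refine Finset.sum_congr rfl fun i _ => Finset.sum_congr rfl fun j _ => ?_
        rw [Finset.mul_sum, Finset.sum_mul]
        exact Finset.sum_congr rfl fun k _ => by ring
    _ = ∑ k, ∑ i, ∑ j, ν k * (c i * e k j * poissonBracketT (F i) (F j) p) := sum_rot _
    _ = ∑ k, ν k * ∑ i, ∑ j, c i * e k j * poissonBracketT (F i) (F j) p := by
        refine Finset.sum_congr rfl fun k _ => ?_
        rw [Finset.mul_sum]
        exact Finset.sum_congr rfl fun i _ => by rw [Finset.mul_sum]

lemma Q_congr {c c' d d' : Fin n → ℝ} (hc : ∀ s, c s = c' s) (hd : ∀ s, d s = d' s)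
    (p : E n) : Q F c d p = Q F c' d' p := by
  unfold Q
  exact Finset.sum_congr rfl fun i _ => Finset.sum_congr rfl fun j _ => by rw [hc, hd]

lemma Q_zero_left {c d : Fin n → ℝ} (hc : ∀ s, c s = 0) (p : E n) : Q F c d p = 0 := by
  unfold Q
  exact Finset.sum_eq_zero fun i _ => Finset.sum_eq_zero fun j _ => by rw [hc]; ring

lemma Q_zero_right {c d : Fin n → ℝ} (hd : ∀ s, d s = 0) (p : E n) : Q F c d p = 0 := by
  unfold Q
  exact Finset.sum_eq_zero fun i _ => Finset.sum_eq_zero fun j _ => by rw [hd]; ring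

lemma Q_neg_left (c d : Fin n → ℝ) (p : E n) :
    Q F (fun s => -c s) d p = -Q F c d p := by
  unfold Q
  rw [← Finset.sum_neg_distrib]
  refine Finset.sum_congr rfl fun i _ => ?_
  rw [← Finset.sum_neg_distrib]
  exact Finset.sum_congr rfl fun j _ => by ring

lemma Q_neg_right (c d : Fin n → ℝ) (p : E n) :
    Q F c (fun s => -d s) p = -Q F c d p := by
  unfold Q
  rw [← Finset.sum_neg_distrib]
  refine Finset.sum_congr rfl fun i _ => ?_
  rw [← Finset.sum_neg_distrib]
  exact Finset.sum_congr rfl fun j _ => by ring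

lemma Q_antisym_zero {c d : Fin n → ℝ} (hcd : ∀ i j, c i * d j = d i * c j) (p : E n) :
    Q F c d p = 0 := by
  have h2 : Q F c d p = -Q F c d p := by
    unfold Q
    conv_lhs => rw [Finset.sum_comm]
    rw [← Finset.sum_neg_distrib]
    refine Finset.sum_congr rfl fun i _ => ?_
    rw [← Finset.sum_neg_distrib]
    refine Finset.sum_congr rfl fun j _ => ?_
    rw [pb_antisymm (F i) (F j) p]
    linear_combination (-(poissonBracketT (F i) (F j) p)) * hcd j i
  linarith

lemma sum_collect {ι κ ν : Type*} [Fintype ι] [Fintype κ] [Fintype ν]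
    (A : ι → κ → ℝ) (B : ι → κ → ν → ℝ) (C : ν → ℝ) :
    ∑ i, ∑ j, A i j * ∑ s, B i j s * C s = ∑ s, (∑ i, ∑ j, A i j * B i j s) * C s := by
  calc ∑ i, ∑ j, A i j * ∑ s, B i j s * C s
      = ∑ i, ∑ j, ∑ s, A i j * B i j s * C s := by
        refine Finset.sum_congr rfl fun i _ => Finset.sum_congr rfl fun j _ => ?_
        rw [Finset.mul_sum]
        exact Finset.sum_congr rfl fun s _ => by ring
    _ = ∑ s, ∑ i, ∑ j, A i j * B i j s * C s := sum_rot _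
    _ = ∑ s, (∑ i, ∑ j, A i j * B i j s) * C s := by
        refine Finset.sum_congr rfl fun s _ => ?_
        rw [Finset.sum_mul]
        exact Finset.sum_congr rfl fun i _ => by rw [Finset.sum_mul]

end Algebra

end PBAux

/-- **Proposition 2.** Suppose `F₁,…,F_n` satisfy the linear closure relation
`{F_i,F_j} = Σ_s ξ^{ij}_s F_s` (for `i < j`) with constant structure vectors
`ξ^{ij} ∈ ℝⁿ`, and `ξ^{ab}_i ξ^{pq}_j = ξ^{pq}_i ξ^{ab}_j` for all indices with
`a < b`, `p < q`, `a < p`, `i < j`. Then the derived series of the span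
`L = span{F₁,…,F_n}` terminates at the second step:
the Poisson bracket of any two elements of `[L,L]` vanishes identically;
in particular `L` with the Poisson bracket is a solvable Lie algebra. -/
theorem solvable_lie_algebra_of_first_integrals
    (n : ℕ)
    (F : Fin n → (Fin n → ℝ) × (Fin n → ℝ) × ℝ → ℝ)
    (hF : ∀ i, ContDiff ℝ (⊤ : ℕ∞) (F i))
    (ξ : Fin n → Fin n → Fin n → ℝ)
    (hbr : ∀ i j : Fin n, i < j → ∀ q,
      poissonBracketT (F i) (F j) q = ∑ s, ξ i j s * F s q)
    (hξ : ∀ a b p q i j : Fin n, a < b → p < q → a < p → i < j →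
      ξ a b i * ξ p q j = ξ p q i * ξ a b j) :
    ∀ f ∈ Submodule.span ℝ
        {h : (Fin n → ℝ) × (Fin n → ℝ) × ℝ → ℝ |
          ∃ f₁ ∈ Submodule.span ℝ (Set.range F),
            ∃ f₂ ∈ Submodule.span ℝ (Set.range F), h = poissonBracketT f₁ f₂},
      ∀ g ∈ Submodule.span ℝ
        {h : (Fin n → ℝ) × (Fin n → ℝ) × ℝ → ℝ |
          ∃ f₁ ∈ Submodule.span ℝ (Set.range F),
            ∃ f₂ ∈ Submodule.span ℝ (Set.range F), h = poissonBracketT f₁ f₂},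
      ∀ q, poissonBracketT f g q = 0 := by
  classical
  intro f hf' g hg' q0
  have dF : ∀ i, Differentiable ℝ (F i) := fun i => (hF i).differentiable (by simp)
  have dFat : ∀ (p : PBAux.E n) i, DifferentiableAt ℝ (F i) p :=
    fun p i => (dF i).differentiableAt
  set η : Fin n → Fin n → Fin n → ℝ :=
    fun i j => if i < j then ξ i j else if j < i then (fun s => -ξ j i s) else 0 with hηdef
  have ηlt : ∀ {i j : Fin n}, i < j → ∀ s, η i j s = ξ i j s := by
    intro i j hij s; simp only [hηdef]; rw [if_pos hij]
  have ηgt : ∀ {i j : Fin n}, j < i → ∀ s, η i j s = -ξ j i s := by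
    intro i j hij s; simp only [hηdef]; rw [if_neg (asymm hij), if_pos hij]
  have ηeq : ∀ (i : Fin n) (s : Fin n), η i i s = 0 := by
    intro i s; simp only [hηdef]; rw [if_neg (lt_irrefl i), if_neg (lt_irrefl i)]; rfl
  have hbr' : ∀ (i j : Fin n) (p : PBAux.E n),
      poissonBracketT (F i) (F j) p = ∑ s, η i j s * F s p := by
    intro i j p
    rcases lt_trichotomy i j with hij | rfl | hij
    · rw [hbr i j hij]; exact Finset.sum_congr rfl fun s _ => by rw [ηlt hij]
    · rw [PBAux.pb_self]; exact (Finset.sum_eq_zero fun s _ => by rw [ηeq]; ring).symm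
    · rw [PBAux.pb_antisymm (F j) (F i) p, hbr j i hij, ← Finset.sum_neg_distrib]
      exact Finset.sum_congr rfl fun s _ => by rw [ηgt hij]; ring
  have Qexp : ∀ (c d : Fin n → ℝ) (p : PBAux.E n),
      poissonBracketT (fun x => ∑ i, c i * F i x) (fun x => ∑ j, d j * F j x) p
        = PBAux.Q F c d p := by
    intro c d p
    rw [PBAux.pb_sum_left c F (fun x => ∑ j, d j * F j x) p (dFat p)]
    unfold PBAux.Q
    refine Finset.sum_congr rfl fun i _ => ?_
    rw [PBAux.pb_sum_right (F i) d F p (dFat p), Finset.mul_sum]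
    exact Finset.sum_congr rfl fun j _ => by ring
  set Vsub : Submodule ℝ (Fin n → ℝ) :=
    Submodule.span ℝ (Set.range fun kl : Fin n × Fin n => η kl.1 kl.2) with hVdef
  have hrep : ∀ u ∈ Submodule.span ℝ
      {h : (Fin n → ℝ) × (Fin n → ℝ) × ℝ → ℝ |
        ∃ f₁ ∈ Submodule.span ℝ (Set.range F),
          ∃ f₂ ∈ Submodule.span ℝ (Set.range F), h = poissonBracketT f₁ f₂},
      ∃ c, c ∈ Vsub ∧ u = fun p => ∑ s, c s * F s p := by
    intro u hu
    induction hu using Submodule.span_induction with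
    | mem x hx =>
      obtain ⟨f₁, hf₁, f₂, hf₂, rfl⟩ := hx
      obtain ⟨aa, ha⟩ := (Submodule.mem_span_range_iff_exists_fun ℝ).mp hf₁
      obtain ⟨bb, hb⟩ := (Submodule.mem_span_range_iff_exists_fun ℝ).mp hf₂
      have e1 : f₁ = fun p => ∑ i, aa i * F i p := by
        rw [← ha]; funext p; simp [Finset.sum_apply]
      have e2 : f₂ = fun p => ∑ j, bb j * F j p := by
        rw [← hb]; funext p; simp [Finset.sum_apply]
      refine ⟨fun s => ∑ i, ∑ j, aa i * bb j * η i j s, ?_, ?_⟩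
      · have hco : (fun s => ∑ i, ∑ j, aa i * bb j * η i j s)
            = ∑ i, ∑ j, (aa i * bb j) • η i j := by
          funext s; simp [Finset.sum_apply]
        rw [hco]
        exact Submodule.sum_mem _ fun i _ => Submodule.sum_mem _ fun j _ =>
          Submodule.smul_mem _ _ (Submodule.subset_span ⟨(i, j), rfl⟩)
      · funext p
        rw [e1, e2, Qexp aa bb p]
        unfold PBAux.Q
        calc ∑ i, ∑ j, aa i * bb j * poissonBracketT (F i) (F j) p
            = ∑ i, ∑ j, (aa i * bb j) * ∑ s, η i j s * F s p :=
              Finset.sum_congr rfl fun i _ => Finset.sum_congr rfl fun j _ => by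
                rw [hbr']
          _ = ∑ s, (∑ i, ∑ j, aa i * bb j * η i j s) * F s p := PBAux.sum_collect _ _ _
    | zero => exact ⟨0, Submodule.zero_mem _, by funext p; simp⟩
    | add x y hx hy ihx ihy =>
      obtain ⟨c, hc, rfl⟩ := ihx
      obtain ⟨d, hd, rfl⟩ := ihy
      exact ⟨c + d, Submodule.add_mem _ hc hd, by
        funext p; simp [Finset.sum_add_distrib, add_mul]⟩
    | smul r x hx ihx =>
      obtain ⟨c, hc, rfl⟩ := ihx
      exact ⟨r • c, Submodule.smul_mem _ _ hc, by
        funext p; simp [Finset.mul_sum, mul_assoc]⟩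
  have minall' : ∀ a' b' p' q' : Fin n, a' < b' → p' < q' → a' ≠ p' →
      ∀ i j, ξ a' b' i * ξ p' q' j = ξ p' q' i * ξ a' b' j := by
    intro a' b' p' q' hab hpq hne i j
    rcases lt_or_gt_of_ne hne with hap | hap
    · rcases lt_trichotomy i j with hij | rfl | hij
      · exact hξ a' b' p' q' i j hab hpq hap hij
      · ring
      · have := hξ a' b' p' q' j i hab hpq hap hij; linarith
    · rcases lt_trichotomy i j with hij | rfl | hij
      · exact (hξ p' q' a' b' i j hpq hab hap hij).symm
      · ring
      · have := hξ p' q' a' b' j i hpq hab hap hij; linarith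
  have GEN : ∀ (k l m q' : Fin n) (p : PBAux.E n), PBAux.Q F (η k l) (η m q') p = 0 := by
    by_cases HH : ∀ (a b c : Fin n), a < b → a < c → ∀ i j, ξ a b i * ξ a c j = ξ a c i * ξ a b j
    · have minall : ∀ a' b' p' q' : Fin n, a' < b' → p' < q' →
          ∀ i j, ξ a' b' i * ξ p' q' j = ξ p' q' i * ξ a' b' j := by
        intro a' b' p' q' hab hpq i j
        by_cases hne : a' = p'
        · subst hne; exact HH a' b' q' hab hpq i j
        · exact minall' a' b' p' q' hab hpq hne i j
      have ηmin : ∀ (k l m q' : Fin n) (i j : Fin n),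
          η k l i * η m q' j = η m q' i * η k l j := by
        intro k l m q' i j
        rcases lt_trichotomy k l with h1 | rfl | h1 <;>
          rcases lt_trichotomy m q' with h2 | rfl | h2
        · rw [ηlt h1, ηlt h1, ηlt h2, ηlt h2]; exact minall k l m q' h1 h2 i j
        · simp only [ηeq]; try ring
        · rw [ηlt h1, ηlt h1, ηgt h2, ηgt h2]
          linear_combination (-1 : ℝ) * minall k l q' m h1 h2 i j
        · simp only [ηeq]; try ring
        · simp only [ηeq]; try ring
        · simp only [ηeq]; try ring
        · rw [ηgt h1, ηgt h1, ηlt h2, ηlt h2]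
          linear_combination (-1 : ℝ) * minall l k m q' h1 h2 i j
        · simp only [ηeq]; try ring
        · rw [ηgt h1, ηgt h1, ηgt h2, ηgt h2]
          linear_combination minall l k q' m h1 h2 i j
      intro k l m q' p
      exact PBAux.Q_antisym_zero F (fun i j => ηmin k l m q' i j) p
    · push_neg at HH
      obtain ⟨a, b, q1, hab, haq, i0, j0, hne⟩ := HH
      have Z1 : ∀ s t : Fin n, s < t → s ≠ a → ∀ k, ξ s t k = 0 := by
        intro s t hst hsa k
        by_contra hk
        have hb' : ∀ i, ξ a b i * ξ s t k = ξ s t i * ξ a b k :=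
          fun i => minall' a b s t hab hst (Ne.symm hsa) i k
        have hq' : ∀ i, ξ a q1 i * ξ s t k = ξ s t i * ξ a q1 k :=
          fun i => minall' a q1 s t haq hst (Ne.symm hsa) i k
        apply hne
        have key : (ξ s t k * ξ s t k) * (ξ a b i0 * ξ a q1 j0 - ξ a q1 i0 * ξ a b j0) = 0 := by
          linear_combination (ξ a q1 j0 * ξ s t k) * hb' i0 + (ξ s t i0 * ξ a b k) * hq' j0
            - (ξ a b j0 * ξ s t k) * hq' i0 - (ξ s t i0 * ξ a q1 k) * hb' j0
        rcases mul_eq_zero.mp key with hzz | hzz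
        · exact absurd hzz (mul_ne_zero hk hk)
        · exact sub_eq_zero.mp hzz
      have pb0 : ∀ s t : Fin n, s ≠ a → t ≠ a → ∀ p : PBAux.E n,
          poissonBracketT (F s) (F t) p = 0 := by
        intro s t hs ht p
        rcases lt_trichotomy s t with hst | rfl | hst
        · rw [hbr s t hst]
          exact Finset.sum_eq_zero fun k _ => by rw [Z1 s t hst hs k]; ring
        · exact PBAux.pb_self _ p
        · rw [PBAux.pb_antisymm (F t) (F s) p, hbr t s hst,
            Finset.sum_eq_zero (fun k _ => by rw [Z1 t s hst ht k]; ring), neg_zero]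
      set X' : Fin n → PBAux.E n → ℝ :=
        fun t p => if a < t then ∑ s, ξ a t s * F s p else 0 with hX'def
      set α' : Fin n → ℝ := fun t => if a < t then ξ a t a else 0 with hα'def
      have hX'pos : ∀ {t : Fin n}, a < t → ∀ p : PBAux.E n,
          X' t p = ∑ s, ξ a t s * F s p := by
        intro t ht p; simp only [hX'def]; rw [if_pos ht]
      have hX'neg : ∀ {t : Fin n}, ¬ a < t → ∀ p : PBAux.E n, X' t p = 0 := by
        intro t ht p; simp only [hX'def]; rw [if_neg ht]
      have hα'pos : ∀ {t : Fin n}, a < t → α' t = ξ a t a := by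
        intro t ht; simp only [hα'def]; rw [if_pos ht]
      have hα'neg : ∀ {t : Fin n}, ¬ a < t → α' t = 0 := by
        intro t ht; simp only [hα'def]; rw [if_neg ht]
      have pbaF : ∀ (t : Fin n) (p : PBAux.E n),
          poissonBracketT (F a) (F t) p = X' t p := by
        intro t p
        rcases lt_trichotomy a t with hat | rfl | hat
        · rw [hbr a t hat, hX'pos hat]
        · rw [PBAux.pb_self, hX'neg (lt_irrefl a) p]
        · rw [PBAux.pb_antisymm (F t) (F a) p, hbr t a hat,
            Finset.sum_eq_zero (fun k _ => by rw [Z1 t a hat (ne_of_lt hat) k]; ring),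
            neg_zero, hX'neg (not_lt.mpr hat.le) p]
      have R : ∀ (t u : Fin n) (p : PBAux.E n), α' u * X' t p = α' t * X' u p := by
        intro t u p
        by_cases ht : a < t
        · by_cases hu : a < u
          · rcases eq_or_ne t u with rfl | htu
            · rfl
            · have jac := PBAux.jacobi (F a) (F t) (F u) (hF a) (hF t) (hF u) p
              have h1 : poissonBracketT (F t) (F u) = fun _ => (0:ℝ) :=
                funext fun p' => pb0 t u (ne_of_gt ht) (ne_of_gt hu) p'
              rw [h1, PBAux.pb_zero_right] at jac
              have h2 : poissonBracketT (F u) (F a) = fun x => ∑ s, (-ξ a u s) * F s x := by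
                funext p'
                rw [PBAux.pb_antisymm (F a) (F u) p', hbr a u hu, ← Finset.sum_neg_distrib]
                exact Finset.sum_congr rfl fun s _ => by ring
              have h3 : poissonBracketT (F a) (F t) = fun x => ∑ s, ξ a t s * F s x :=
                funext fun p' => hbr a t ht p'
              rw [h2, h3, PBAux.pb_sum_right (F t) (fun s => -ξ a u s) F p (dFat p),
                PBAux.pb_sum_right (F u) (ξ a t) F p (dFat p)] at jac
              have h4 : ∑ s, (-ξ a u s) * poissonBracketT (F t) (F s) p
                  = ξ a u a * X' t p := by
                rw [Finset.sum_eq_single a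
                  (fun s _ hs => by rw [pb0 t s (ne_of_gt ht) hs p]; ring)
                  (fun hcon => absurd (Finset.mem_univ a) hcon)]
                rw [PBAux.pb_antisymm (F a) (F t) p, pbaF t p]
                ring
              have h5 : ∑ s, ξ a t s * poissonBracketT (F u) (F s) p
                  = -(ξ a t a * X' u p) := by
                rw [Finset.sum_eq_single a
                  (fun s _ hs => by rw [pb0 u s (ne_of_gt hu) hs p]; ring)
                  (fun hcon => absurd (Finset.mem_univ a) hcon)]
                rw [PBAux.pb_antisymm (F a) (F u) p, pbaF u p]
                ring
              rw [h4, h5] at jac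
              rw [hα'pos hu, hα'pos ht]
              linarith
          · rw [hα'neg hu, hX'neg hu p]; ring
        · rw [hX'neg ht p, hα'neg ht]; ring
      have SId : ∀ (u : Fin n) (p : PBAux.E n),
          poissonBracketT (F a) (fun x => ∑ s, ξ a u s * F s x) p
            = ∑ s, ξ a u s * X' s p := by
        intro u p
        rw [PBAux.pb_sum_right (F a) (ξ a u) F p (dFat p)]
        exact Finset.sum_congr rfl fun s _ => by rw [pbaF s p]
      have KEY2 : ∀ b' q' : Fin n, a < b' → a < q' → ∀ p : PBAux.E n,
          PBAux.Q F (ξ a b') (ξ a q') p = 0 := by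
        intro b' q' hb' hq' p
        have pgen : ∀ i j : Fin n, ξ a b' i * ξ a q' j * poissonBracketT (F i) (F j) p
            = (if i = a then ξ a b' a * (ξ a q' j * X' j p) else 0)
              - (if j = a then ξ a q' a * (ξ a b' i * X' i p) else 0) := by
          intro i j
          have hgen : poissonBracketT (F i) (F j) p
              = (if i = a then X' j p else 0) - (if j = a then X' i p else 0) := by
            by_cases hi : i = a
            · by_cases hj : j = a
              · rw [if_pos hi, if_pos hj, hi, hj, PBAux.pb_self]; ring
              · rw [if_pos hi, if_neg hj, sub_zero, hi]; exact pbaF j p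
            · by_cases hj : j = a
              · rw [if_neg hi, if_pos hj, zero_sub, hj,
                  PBAux.pb_antisymm (F a) (F i) p, pbaF i p]
              · rw [if_neg hi, if_neg hj, sub_zero]; exact pb0 i j hi hj p
          rw [hgen]
          by_cases hi : i = a <;> by_cases hj : j = a <;> simp [hi, hj] <;> try ring
        show PBAux.Q F (ξ a b') (ξ a q') p = 0
        unfold PBAux.Q
        have expand : ∑ i, ∑ j, ξ a b' i * ξ a q' j * poissonBracketT (F i) (F j) p
            = ξ a b' a * ∑ t, ξ a q' t * X' t p - ξ a q' a * ∑ t, ξ a b' t * X' t p := by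
          rw [Finset.sum_congr rfl (fun i _ => Finset.sum_congr rfl (fun j _ => pgen i j))]
          rw [Finset.sum_congr rfl (fun i (_ : i ∈ Finset.univ) => Finset.sum_sub_distrib _ _)]
          rw [Finset.sum_sub_distrib]
          congr 1
          · rw [Finset.sum_comm]
            rw [Finset.sum_congr rfl (fun j (_ : j ∈ Finset.univ) =>
              Finset.sum_ite_eq' Finset.univ a (fun _ => ξ a b' a * (ξ a q' j * X' j p)))]
            simp only [Finset.mem_univ, if_true]
            rw [Finset.mul_sum]
          · rw [Finset.sum_congr rfl (fun i (_ : i ∈ Finset.univ) =>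
              Finset.sum_ite_eq' Finset.univ a (fun _ => ξ a q' a * (ξ a b' i * X' i p)))]
            simp only [Finset.mem_univ, if_true]
            rw [Finset.mul_sum]
        rw [expand]
        by_cases hA0 : ∀ t, α' t = 0
        · have hb0 : ξ a b' a = 0 := by have hh := hA0 b'; rwa [hα'pos hb'] at hh
          have hq0 : ξ a q' a = 0 := by have hh := hA0 q'; rwa [hα'pos hq'] at hh
          rw [hb0, hq0]; ring
        · push_neg at hA0
          obtain ⟨u₀, hα₀⟩ := hA0
          have hau₀ : a < u₀ := by
            by_contra hcon
            exact hα₀ (hα'neg hcon)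
          have hcol : ∀ (z : Fin n) (p' : PBAux.E n),
              α' u₀ * ∑ s, ξ a z s * X' s p'
                = (∑ s, ξ a z s * α' s) * X' u₀ p' := by
            intro z p'
            rw [Finset.mul_sum, Finset.sum_mul]
            refine Finset.sum_congr rfl fun s _ => ?_
            linear_combination (ξ a z s) * R s u₀ p'
          have hkey : ∀ u : Fin n, a < u → ∀ p' : PBAux.E n,
              ((∑ t, ξ a u t * α' t) * α' u₀ - α' u * ∑ t, ξ a u₀ t * α' t) * X' u₀ p' = 0 := by
            intro u hu p'
            have hfun2 : (fun x => α' u₀ * ∑ s, ξ a u s * F s x)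
                = fun x => α' u * ∑ s, ξ a u₀ s * F s x := by
              funext x
              rw [← hX'pos hu x, ← hX'pos hau₀ x]
              exact R u u₀ x
            have hdu : DifferentiableAt ℝ (fun x => ∑ s, ξ a u s * F s x) p' :=
              (HasFDerivAt.fun_sum fun s _ =>
                ((dFat p' s).hasFDerivAt.const_mul (ξ a u s))).differentiableAt
            have hdu₀ : DifferentiableAt ℝ (fun x => ∑ s, ξ a u₀ s * F s x) p' :=
              (HasFDerivAt.fun_sum fun s _ =>
                ((dFat p' s).hasFDerivAt.const_mul (ξ a u₀ s))).differentiableAt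
            have B1 : α' u₀ * poissonBracketT (F a) (fun x => ∑ s, ξ a u s * F s x) p'
                = α' u * poissonBracketT (F a) (fun x => ∑ s, ξ a u₀ s * F s x) p' := by
              rw [← PBAux.pb_const_mul_right (F a) _ (α' u₀) p' hdu,
                ← PBAux.pb_const_mul_right (F a) _ (α' u) p' hdu₀, hfun2]
            rw [SId u p', SId u₀ p'] at B1
            have hc1 := hcol u p'
            have hc2 := hcol u₀ p'
            linear_combination (α' u₀) * B1 - (α' u₀) * hc1 + (α' u) * hc2
          by_cases hX : X' u₀ p = 0
          · have hs1 : ∑ t, ξ a q' t * X' t p = 0 := by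
              have hh := hcol q' p
              rw [hX, mul_zero] at hh
              exact (mul_eq_zero.mp hh).resolve_left hα₀
            have hs2 : ∑ t, ξ a b' t * X' t p = 0 := by
              have hh := hcol b' p
              rw [hX, mul_zero] at hh
              exact (mul_eq_zero.mp hh).resolve_left hα₀
            rw [hs1, hs2]; ring
          · have E1 : (∑ t, ξ a b' t * α' t) * α' u₀ = α' b' * ∑ t, ξ a u₀ t * α' t := by
              rcases mul_eq_zero.mp (hkey b' hb' p) with hzz | hzz
              · exact sub_eq_zero.mp hzz
              · exact absurd hzz hX
            have E2 : (∑ t, ξ a q' t * α' t) * α' u₀ = α' q' * ∑ t, ξ a u₀ t * α' t := by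
              rcases mul_eq_zero.mp (hkey q' hq' p) with hzz | hzz
              · exact sub_eq_zero.mp hzz
              · exact absurd hzz hX
            have hsuf : (α' u₀ * α' u₀) *
                (ξ a b' a * (∑ t, ξ a q' t * X' t p) - ξ a q' a * (∑ t, ξ a b' t * X' t p))
                  = 0 := by
              linear_combination (ξ a b' a * α' u₀) * hcol q' p - (ξ a q' a * α' u₀) * hcol b' p
                + (ξ a b' a * X' u₀ p) * E2 - (ξ a q' a * X' u₀ p) * E1
                + (ξ a b' a * (∑ t, ξ a u₀ t * α' t) * X' u₀ p) * hα'pos hq'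
                - (ξ a q' a * (∑ t, ξ a u₀ t * α' t) * X' u₀ p) * hα'pos hb'
            exact (mul_eq_zero.mp hsuf).resolve_left (mul_ne_zero hα₀ hα₀)
      have RED : ∀ k l : Fin n, (∀ s, η k l s = 0)
          ∨ (∃ t, a < t ∧ ∀ s, η k l s = ξ a t s)
          ∨ (∃ t, a < t ∧ ∀ s, η k l s = -ξ a t s) := by
        intro k l
        rcases lt_trichotomy k l with h1 | rfl | h1
        · by_cases hk : k = a
          · subst hk; exact Or.inr (Or.inl ⟨l, h1, fun s => ηlt h1 s⟩)
          · exact Or.inl fun s => by rw [ηlt h1 s, Z1 k l h1 hk s]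
        · exact Or.inl fun s => ηeq k s
        · by_cases hl : l = a
          · subst hl; exact Or.inr (Or.inr ⟨k, h1, fun s => ηgt h1 s⟩)
          · exact Or.inl fun s => by rw [ηgt h1 s, Z1 l k h1 hl s, neg_zero]
      intro k l m q' p
      rcases RED k l with hc | ⟨t1, ht1, hc⟩ | ⟨t1, ht1, hc⟩
      · exact PBAux.Q_zero_left F hc p
      · rcases RED m q' with hd | ⟨t2, ht2, hd⟩ | ⟨t2, ht2, hd⟩
        · exact PBAux.Q_zero_right F hd p
        · rw [PBAux.Q_congr F hc hd p]; exact KEY2 t1 t2 ht1 ht2 p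
        · rw [PBAux.Q_congr F hc hd p, PBAux.Q_neg_right F (ξ a t1) (ξ a t2) p,
            KEY2 t1 t2 ht1 ht2 p, neg_zero]
      · rcases RED m q' with hd | ⟨t2, ht2, hd⟩ | ⟨t2, ht2, hd⟩
        · exact PBAux.Q_zero_right F hd p
        · rw [PBAux.Q_congr F hc hd p, PBAux.Q_neg_left F (ξ a t1) (ξ a t2) p,
            KEY2 t1 t2 ht1 ht2 p, neg_zero]
        · rw [PBAux.Q_congr F hc hd p,
            PBAux.Q_neg_left F (ξ a t1) (fun s => -ξ a t2 s) p,
            PBAux.Q_neg_right F (ξ a t1) (ξ a t2) p,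
            KEY2 t1 t2 ht1 ht2 p, neg_zero, neg_zero]
  have KEYQ : ∀ c, c ∈ Vsub → ∀ d, d ∈ Vsub → ∀ p : PBAux.E n, PBAux.Q F c d p = 0 := by
    intro c hc d hd p
    obtain ⟨μ, hμ⟩ := (Submodule.mem_span_range_iff_exists_fun ℝ).mp hc
    obtain ⟨ν, hν⟩ := (Submodule.mem_span_range_iff_exists_fun ℝ).mp hd
    have hc' : ∀ s, c s = ∑ kl : Fin n × Fin n, μ kl * η kl.1 kl.2 s := by
      intro s; rw [← hμ]; simp [Finset.sum_apply]
    have hd' : ∀ s, d s = ∑ kl : Fin n × Fin n, ν kl * η kl.1 kl.2 s := by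
      intro s; rw [← hν]; simp [Finset.sum_apply]
    rw [PBAux.Q_congr F hc' hd' p,
      PBAux.Q_sum_left F μ (fun kl : Fin n × Fin n => η kl.1 kl.2) _ p]
    refine Finset.sum_eq_zero fun kl _ => ?_
    rw [PBAux.Q_sum_right F ν (fun mq : Fin n × Fin n => η mq.1 mq.2) (η kl.1 kl.2) p]
    refine mul_eq_zero_of_right _ (Finset.sum_eq_zero fun mq _ => ?_)
    exact mul_eq_zero_of_right _ (GEN kl.1 kl.2 mq.1 mq.2 p)
  obtain ⟨c, hc, hfeq⟩ := hrep f hf'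
  obtain ⟨d, hd, hgeq⟩ := hrep g hg'
  rw [hfeq, hgeq, Qexp c d q0]
  exact KEYQ c hc d hd q0
end

section
/- Let H : ℝⁿ×ℝⁿ×ℝ → ℝ be smooth and ϝ₁, …, ϝ_m smooth first integrals of H; set A(x,ψ,t) = ({ϝ_p,ϝ_q})_{p,q=1}^m, b = (ϝ₁,…,ϝ_m)ᵀ, ϝ(λ) = Σ_k ϝ_k λ_k. Suppose (λ¹,…,λⁿ, ξ^{12},…,ξ^{(n−1)n}, r₁,…,r_n) with λ^i ∈ ℝᵐ, ξ^{ij} ∈ ℝⁿ, r_i ∈ ℝ satisfies: (a) (λ^i)ᵀ A(x,ψ,t) λ^j = (ξ^{ij})ᵀ Λ b(x,ψ,t) identically in (x,ψ,t) for all i < j, where Λ has rows (λ¹)ᵀ,…,(λⁿ)ᵀ; (b) ξ^{ab}_i ξ^{pq}_j = ξ^{pq}_i ξ^{ab}_j for all a < b, p < q, a < p, i < j; (c) Σ_{s=1}^n r_s ξ^{ij}_s = 0 for all i < j; and (d) the gradients ∇_{(x,ψ)}ϝ(λ¹), …, ∇_{(x,ψ)}ϝ(λⁿ) have rank n at every point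 of M_ϝ = {(x,ψ,t) : ϝ(λ^i)(x,ψ,t) = r_i, 1 ≤ i ≤ n}. Then the functions F_i := ϝ(λ^i), i = 1,…,n, are first integrals of H which satisfy all the hypotheses of the Kozlov–Kolesnikov theorem on M_ϝ: {F_i,F_j} = Σ_s ξ^{ij}_s F_s, the F_i are independent on M_ϝ, (r₁,…,r_n)·ξ^{ij} = 0 for all i < j, and the span of F₁,…,F_n is a solvable Lie algebra under the Poisson bracket. -/
open Finset

/-- The gradient of `f` with respect to the `2n` variables `(x,ψ)`,
at the point `q`, as a vector indexed by `Fin n ⊕ Fin n`. -/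
noncomputable def gradXPsi {n : ℕ}
    (f : (Fin n → ℝ) × (Fin n → ℝ) × ℝ → ℝ)
    (q : (Fin n → ℝ) × (Fin n → ℝ) × ℝ) : (Fin n ⊕ Fin n) → ℝ :=
  Sum.elim (fun a => fderiv ℝ f q (Pi.single a 1, 0, 0))
           (fun a => fderiv ℝ f q (0, Pi.single a 1, 0))

namespace EFIKK
variable {N : ℕ}

abbrev E (N : ℕ) := (Fin N → ℝ) × (Fin N → ℝ) × ℝ

def Xv (i : Fin N) : E N := (Pi.single i 1, 0, 0)
def Yv (i : Fin N) : E N := (0, Pi.single i 1, 0)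

lemma pb_def (f g : E N → ℝ) (q : E N) :
    poissonBracketT f g q
      = ∑ i, (fderiv ℝ f q (Yv i) * fderiv ℝ g q (Xv i)
          - fderiv ℝ f q (Xv i) * fderiv ℝ g q (Yv i)) := rfl

lemma pb_self (f : E N → ℝ) (q : E N) : poissonBracketT f f q = 0 := by
  simp [pb_def, mul_comm]

lemma pb_antisymm (f g : E N → ℝ) (q : E N) :
    poissonBracketT f g q = - poissonBracketT g f q := by
  rw [pb_def, pb_def, ← Finset.sum_neg_distrib]
  exact Finset.sum_congr rfl fun i _ => by ring

lemma pb_right_zero (f : E N → ℝ) (q : E N) :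
    poissonBracketT f (fun _ => (0:ℝ)) q = 0 := by
  simp [pb_def, fderiv_const]

lemma pb_left_zero (g : E N → ℝ) (q : E N) :
    poissonBracketT (fun _ => (0:ℝ)) g q = 0 := by
  simp [pb_def, fderiv_const]

lemma fderiv_combo {ι : Type*} [Fintype ι] (c : ι → ℝ) (φ : ι → E N → ℝ) (q : E N)
    (hφ : ∀ i, DifferentiableAt ℝ (φ i) q) :
    fderiv ℝ (fun p => ∑ i, c i * φ i p) q = ∑ i, c i • fderiv ℝ (φ i) q :=
  (HasFDerivAt.fun_sum fun i _ => ((hφ i).hasFDerivAt.const_mul (c i))).fderiv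

lemma pb_right_combo {ι : Type*} [Fintype ι] (f : E N → ℝ) (c : ι → ℝ) (φ : ι → E N → ℝ)
    (q : E N) (hφ : ∀ i, DifferentiableAt ℝ (φ i) q) :
    poissonBracketT f (fun p => ∑ i, c i * φ i p) q
      = ∑ i, c i * poissonBracketT f (φ i) q := by
  rw [pb_def]
  have hD := fderiv_combo c φ q hφ
  calc ∑ t, (fderiv ℝ f q (Yv t) * fderiv ℝ (fun p => ∑ i, c i * φ i p) q (Xv t)
          - fderiv ℝ f q (Xv t) * fderiv ℝ (fun p => ∑ i, c i * φ i p) q (Yv t))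
      = ∑ t, ∑ i, c i * (fderiv ℝ f q (Yv t) * fderiv ℝ (φ i) q (Xv t)
          - fderiv ℝ f q (Xv t) * fderiv ℝ (φ i) q (Yv t)) := by
        refine Finset.sum_congr rfl fun t _ => ?_
        rw [hD]
        simp only [ContinuousLinearMap.sum_apply, ContinuousLinearMap.smul_apply,
          smul_eq_mul, Finset.mul_sum, ← Finset.sum_sub_distrib]
        exact Finset.sum_congr rfl fun i _ => by ring
    _ = ∑ i, c i * poissonBracketT f (φ i) q := by
        rw [Finset.sum_comm]
        exact Finset.sum_congr rfl fun i _ => by rw [pb_def, Finset.mul_sum]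

lemma pb_left_combo {ι : Type*} [Fintype ι] (g : E N → ℝ) (c : ι → ℝ) (φ : ι → E N → ℝ)
    (q : E N) (hφ : ∀ i, DifferentiableAt ℝ (φ i) q) :
    poissonBracketT (fun p => ∑ i, c i * φ i p) g q
      = ∑ i, c i * poissonBracketT (φ i) g q := by
  rw [pb_antisymm, pb_right_combo g c φ q hφ, ← Finset.sum_neg_distrib]
  exact Finset.sum_congr rfl fun i _ => by rw [pb_antisymm (φ i) g]; ring

lemma pb_right_smul (f g : E N → ℝ) (c : ℝ) (q : E N) (hg : DifferentiableAt ℝ g q) :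
    poissonBracketT f (fun x => c * g x) q = c * poissonBracketT f g q := by
  rw [pb_def, pb_def, Finset.mul_sum]
  have hD : fderiv ℝ (fun x => c * g x) q = c • fderiv ℝ g q :=
    (hg.hasFDerivAt.const_mul c).fderiv
  exact Finset.sum_congr rfl fun i _ => by
    rw [hD]; simp only [ContinuousLinearMap.smul_apply, smul_eq_mul]; ring

lemma pb_left_smul (f g : E N → ℝ) (c : ℝ) (q : E N) (hf : DifferentiableAt ℝ f q) :
    poissonBracketT (fun x => c * f x) g q = c * poissonBracketT f g q := by
  rw [pb_antisymm, pb_right_smul g f c q hf, pb_antisymm f g]; ring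

lemma sum_skew (T : Fin N → Fin N → ℝ) (h : ∀ s t, T s t + T t s = 0) :
    ∑ s, ∑ t, T s t = 0 := by
  have h2 : (∑ s, ∑ t, T s t) + (∑ s, ∑ t, T s t) = 0 := by
    nth_rewrite 2 [Finset.sum_comm]
    simp only [← Finset.sum_add_distrib, h, Finset.sum_const_zero]
  linarith

/-- second derivative applied to two vectors -/
noncomputable def S2 (f : E N → ℝ) (q w v : E N) : ℝ := fderiv ℝ (fderiv ℝ f) q w v

lemma hasFDerivAt_fderiv_apply (f : E N → ℝ) (hf : ContDiff ℝ (⊤ : ℕ∞) f) (q v : E N) :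
    HasFDerivAt (fun p => fderiv ℝ f p v)
      ((fderiv ℝ f q).comp (0 : E N →L[ℝ] E N)
        + (fderiv ℝ (fderiv ℝ f) q).flip v) q := by
  have h1 : HasFDerivAt (fderiv ℝ f) (fderiv ℝ (fderiv ℝ f) q) q := by
    have : ContDiff ℝ 1 (fderiv ℝ f) := hf.fderiv_right (WithTop.coe_le_coe.mpr le_top)
    exact ((this.differentiable one_ne_zero) q).hasFDerivAt
  exact h1.clm_apply (hasFDerivAt_const v q)

lemma pb_hasFDerivAt (f g : E N → ℝ) (hf : ContDiff ℝ (⊤ : ℕ∞) f) (hg : ContDiff ℝ (⊤ : ℕ∞) g) (q : E N) :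
    HasFDerivAt (poissonBracketT f g)
      (∑ i, (((fun p => fderiv ℝ f p (Yv i)) q •
              ((fderiv ℝ g q).comp (0 : E N →L[ℝ] E N) + (fderiv ℝ (fderiv ℝ g) q).flip (Xv i))
            + (fun p => fderiv ℝ g p (Xv i)) q •
              ((fderiv ℝ f q).comp (0 : E N →L[ℝ] E N) + (fderiv ℝ (fderiv ℝ f) q).flip (Yv i)))
          - ((fun p => fderiv ℝ f p (Xv i)) q •
              ((fderiv ℝ g q).comp (0 : E N →L[ℝ] E N) + (fderiv ℝ (fderiv ℝ g) q).flip (Yv i))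
            + (fun p => fderiv ℝ g p (Yv i)) q •
              ((fderiv ℝ f q).comp (0 : E N →L[ℝ] E N) + (fderiv ℝ (fderiv ℝ f) q).flip (Xv i))))) q := by
  have key : ∀ i : Fin N, HasFDerivAt
      (fun p => fderiv ℝ f p (Yv i) * fderiv ℝ g p (Xv i)
          - fderiv ℝ f p (Xv i) * fderiv ℝ g p (Yv i)) _ q :=
    fun i => (((hasFDerivAt_fderiv_apply f hf q (Yv i)).mul
        (hasFDerivAt_fderiv_apply g hg q (Xv i))).sub
      ((hasFDerivAt_fderiv_apply f hf q (Xv i)).mul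
        (hasFDerivAt_fderiv_apply g hg q (Yv i))))
  exact HasFDerivAt.fun_sum (fun i _ => key i)

lemma pb_fderiv_apply (f g : E N → ℝ) (hf : ContDiff ℝ (⊤ : ℕ∞) f) (hg : ContDiff ℝ (⊤ : ℕ∞) g)
    (q w : E N) :
    fderiv ℝ (poissonBracketT f g) q w
      = ∑ i, (S2 f q w (Yv i) * fderiv ℝ g q (Xv i)
            + fderiv ℝ f q (Yv i) * S2 g q w (Xv i)
            - S2 f q w (Xv i) * fderiv ℝ g q (Yv i)
            - fderiv ℝ f q (Xv i) * S2 g q w (Yv i)) := by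
  rw [(pb_hasFDerivAt f g hf hg q).fderiv]
  simp only [ContinuousLinearMap.sum_apply, ContinuousLinearMap.sub_apply,
    ContinuousLinearMap.add_apply, ContinuousLinearMap.smul_apply,
    ContinuousLinearMap.comp_apply, ContinuousLinearMap.zero_apply,
    ContinuousLinearMap.flip_apply, map_zero, smul_eq_mul, S2]
  exact Finset.sum_congr rfl fun i _ => by ring

lemma jacobi_alg (fx fy gx gy hx hy : Fin N → ℝ)
    (fxx fxy fyx fyy gxx gxy gyx gyy hxx hxy hyx hyy : Fin N → Fin N → ℝ)
    (hf1 : ∀ i j, fxx i j = fxx j i) (hf2 : ∀ i j, fyy i j = fyy j i)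
    (hf3 : ∀ i j, fyx i j = fxy j i)
    (hg1 : ∀ i j, gxx i j = gxx j i) (hg2 : ∀ i j, gyy i j = gyy j i)
    (hg3 : ∀ i j, gyx i j = gxy j i)
    (hh1 : ∀ i j, hxx i j = hxx j i) (hh2 : ∀ i j, hyy i j = hyy j i)
    (hh3 : ∀ i j, hyx i j = hxy j i) :
    ∑ i, ∑ j, ((fy i * (gxy i j * hx j + gy j * hxx i j - gxx i j * hy j - gx j * hxy i j)
      - fx i * (gyy i j * hx j + gy j * hyx i j - gyx i j * hy j - gx j * hyy i j))
      + (gy i * (hxy i j * fx j + hy j * fxx i j - hxx i j * fy j - hx j * fxy i j)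
      - gx i * (hyy i j * fx j + hy j * fyx i j - hyx i j * fy j - hx j * fyy i j))
      + (hy i * (fxy i j * gx j + fy j * gxx i j - fxx i j * gy j - fx j * gxy i j)
      - hx i * (fyy i j * gx j + fy j * gyx i j - fyx i j * gy j - fx j * gyy i j))) = 0 := by
  apply sum_skew
  intro s t
  rw [hf1 t s, hf2 t s, hf3 s t, hf3 t s, hg1 t s, hg2 t s, hg3 s t, hg3 t s,
    hh1 t s, hh2 t s, hh3 s t, hh3 t s]
  ring

lemma s2_symm (f : E N → ℝ) (hf : ContDiff ℝ (⊤ : ℕ∞) f) (q u v : E N) :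
    S2 f q u v = S2 f q v u := by
  have hder : ∀ y, HasFDerivAt f (fderiv ℝ f y) y :=
    fun y => ((hf.differentiable (by simp)) y).hasFDerivAt
  have hder2 : HasFDerivAt (fderiv ℝ f) (fderiv ℝ (fderiv ℝ f) q) q := by
    have : ContDiff ℝ 1 (fderiv ℝ f) := hf.fderiv_right (WithTop.coe_le_coe.mpr le_top)
    exact ((this.differentiable one_ne_zero) q).hasFDerivAt
  exact second_derivative_symmetric hder hder2 u v

lemma jacobi (f g h : E N → ℝ) (hf : ContDiff ℝ (⊤ : ℕ∞) f) (hg : ContDiff ℝ (⊤ : ℕ∞) g)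
    (hh : ContDiff ℝ (⊤ : ℕ∞) h) (q : E N) :
    poissonBracketT f (poissonBracketT g h) q
      + poissonBracketT g (poissonBracketT h f) q
      + poissonBracketT h (poissonBracketT f g) q = 0 := by
  have expand : ∀ (A B : Fin N → ℝ) (C D : Fin N → Fin N → ℝ),
      (∑ i, (A i * ∑ j, C i j - B i * ∑ j, D i j))
        = ∑ i, ∑ j, (A i * C i j - B i * D i j) := by
    intro A B C D
    exact Finset.sum_congr rfl fun i _ => by
      rw [Finset.mul_sum, Finset.mul_sum, ← Finset.sum_sub_distrib]
  rw [pb_def f (poissonBracketT g h) q, pb_def g (poissonBracketT h f) q,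
    pb_def h (poissonBracketT f g) q]
  simp only [pb_fderiv_apply g h hg hh q, pb_fderiv_apply h f hh hf q,
    pb_fderiv_apply f g hf hg q]
  rw [expand, expand, expand]
  simp only [← Finset.sum_add_distrib]
  exact jacobi_alg (fun i => fderiv ℝ f q (Xv i)) (fun i => fderiv ℝ f q (Yv i))
    (fun i => fderiv ℝ g q (Xv i)) (fun i => fderiv ℝ g q (Yv i))
    (fun i => fderiv ℝ h q (Xv i)) (fun i => fderiv ℝ h q (Yv i))
    (fun i j => S2 f q (Xv i) (Xv j)) (fun i j => S2 f q (Xv i) (Yv j))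
    (fun i j => S2 f q (Yv i) (Xv j)) (fun i j => S2 f q (Yv i) (Yv j))
    (fun i j => S2 g q (Xv i) (Xv j)) (fun i j => S2 g q (Xv i) (Yv j))
    (fun i j => S2 g q (Yv i) (Xv j)) (fun i j => S2 g q (Yv i) (Yv j))
    (fun i j => S2 h q (Xv i) (Xv j)) (fun i j => S2 h q (Xv i) (Yv j))
    (fun i j => S2 h q (Yv i) (Xv j)) (fun i j => S2 h q (Yv i) (Yv j))
    (fun i j => s2_symm f hf q _ _) (fun i j => s2_symm f hf q _ _)
    (fun i j => s2_symm f hf q _ _)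
    (fun i j => s2_symm g hg q _ _) (fun i j => s2_symm g hg q _ _)
    (fun i j => s2_symm g hg q _ _)
    (fun i j => s2_symm h hh q _ _) (fun i j => s2_symm h hh q _ _)
    (fun i j => s2_symm h hh q _ _)

lemma vanish_main (Φ : Fin N → E N → ℝ) (hΦ : ∀ i, ContDiff ℝ (⊤ : ℕ∞) (Φ i))
    (ξ : Fin N → Fin N → Fin N → ℝ)
    (hclos : ∀ i j : Fin N, i < j → ∀ q, poissonBracketT (Φ i) (Φ j) q = ∑ s, ξ i j s * Φ s q)
    (hξ : ∀ a b p q i j : Fin N, a < b → p < q → a < p → i < j →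
      ξ a b i * ξ p q j = ξ p q i * ξ a b j) :
    ∀ a b p c : Fin N, a < b → p < c → ∀ q,
      poissonBracketT (fun x => ∑ s, ξ a b s * Φ s x) (fun x => ∑ s, ξ p c s * Φ s x) q = 0 := by
  have hΦd : ∀ i, Differentiable ℝ (Φ i) := fun i => (hΦ i).differentiable (by simp)
  have hΦda : ∀ (x : E N) (i : Fin N), DifferentiableAt ℝ (Φ i) x := fun x i => (hΦd i) x
  have hGd : ∀ (v : Fin N → ℝ), Differentiable ℝ (fun x => ∑ s, v s * Φ s x) :=
    fun v => Differentiable.fun_sum fun s _ => (hΦd s).const_mul (v s)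
  have expand : ∀ (v w : Fin N → ℝ) (q : E N),
      poissonBracketT (fun x => ∑ s, v s * Φ s x) (fun x => ∑ t, w t * Φ t x) q
        = ∑ s, ∑ t, v s * (w t * poissonBracketT (Φ s) (Φ t) q) := by
    intro v w q
    rw [pb_left_combo _ v Φ q (hΦda q)]
    refine Finset.sum_congr rfl fun s _ => ?_
    rw [pb_right_combo (Φ s) w Φ q (hΦda q), Finset.mul_sum]
  -- case a < p
  have auxlt : ∀ a b p c : Fin N, a < b → p < c → a < p → ∀ q,
      poissonBracketT (fun x => ∑ s, ξ a b s * Φ s x) (fun x => ∑ s, ξ p c s * Φ s x) q = 0 := by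
    intro a b p c hab hpc hap q
    rw [expand]
    apply sum_skew
    intro s t
    rcases lt_trichotomy s t with hst | hst | hst
    · have h1 := hξ a b p c s t hab hpc hap hst
      rw [pb_antisymm (Φ t) (Φ s) q]
      linear_combination poissonBracketT (Φ s) (Φ t) q * h1
    · subst hst; rw [pb_self]; ring
    · have h1 := hξ a b p c t s hab hpc hap hst
      rw [pb_antisymm (Φ t) (Φ s) q]
      linear_combination (- poissonBracketT (Φ s) (Φ t) q) * h1
  -- case a = p, b < c
  have auxeq : ∀ a b c : Fin N, a < b → b < c → ∀ q,
      poissonBracketT (fun x => ∑ s, ξ a b s * Φ s x) (fun x => ∑ s, ξ a c s * Φ s x) q = 0 := by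
    intro a b c hab hbc q0
    have hac : a < c := hab.trans hbc
    by_cases hprop1 : ∃ μ : ℝ, ∀ s, ξ a c s = μ * ξ a b s
    · obtain ⟨μ, hμ⟩ := hprop1
      have heq : (fun x => ∑ s, ξ a c s * Φ s x)
          = fun x => μ * ∑ s, ξ a b s * Φ s x := by
        funext x; rw [Finset.mul_sum]
        exact Finset.sum_congr rfl fun s _ => by rw [hμ s]; ring
      rw [heq, pb_right_smul _ _ μ q0 ((hGd (ξ a b)).differentiableAt), pb_self, mul_zero]
    by_cases hprop2 : ∃ μ : ℝ, ∀ s, ξ a b s = μ * ξ a c s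
    · obtain ⟨μ, hμ⟩ := hprop2
      have heq : (fun x => ∑ s, ξ a b s * Φ s x)
          = fun x => μ * ∑ s, ξ a c s * Φ s x := by
        funext x; rw [Finset.mul_sum]
        exact Finset.sum_congr rfl fun s _ => by rw [hμ s]; ring
      rw [heq, pb_left_smul _ _ μ q0 ((hGd (ξ a c)).differentiableAt), pb_self, mul_zero]
    -- the non-proportional case
    have hzero : ∀ p' c' : Fin N, p' < c' → p' ≠ a → ∀ s, ξ p' c' s = 0 := by
      intro p' c' h1 h2
      by_contra hex
      push_neg at hex
      obtain ⟨u, hu⟩ := hex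
      have m : ∀ b0 : Fin N, a < b0 → ∀ i j : Fin N,
          ξ a b0 i * ξ p' c' j = ξ p' c' i * ξ a b0 j := by
        intro b0 hb0 i j
        rcases lt_trichotomy a p' with h | h | h
        · rcases lt_trichotomy i j with hij | hij | hij
          · exact hξ a b0 p' c' i j hb0 h1 h hij
          · subst hij; ring
          · linear_combination - hξ a b0 p' c' j i hb0 h1 h hij
        · exact absurd h.symm h2
        · rcases lt_trichotomy i j with hij | hij | hij
          · linear_combination - hξ p' c' a b0 i j h1 hb0 h hij
          · subst hij; ring
          · linear_combination hξ p' c' a b0 j i h1 hb0 h hij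
      have hb' : ∀ i, ξ a b i = ξ a b u / ξ p' c' u * ξ p' c' i := by
        intro i; rw [div_mul_eq_mul_div, eq_div_iff hu]
        linear_combination m b hab i u
      have hc' : ∀ i, ξ a c i = ξ a c u / ξ p' c' u * ξ p' c' i := by
        intro i; rw [div_mul_eq_mul_div, eq_div_iff hu]
        linear_combination m c hac i u
      by_cases hA0 : ξ a b u = 0
      · exact hprop2 ⟨0, fun s => by rw [hb' s, hA0]; ring⟩
      · refine hprop1 ⟨ξ a c u / ξ a b u, fun s => ?_⟩
        rw [hc' s, hb' s]
        field_simp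
    have hvan : ∀ s t : Fin N, s ≠ a → t ≠ a → ∀ x, poissonBracketT (Φ s) (Φ t) x = 0 := by
      intro s t hs ht x
      rcases lt_trichotomy s t with h | h | h
      · rw [hclos s t h x]
        exact Finset.sum_eq_zero fun u _ => by rw [hzero s t h hs u]; ring
      · subst h; exact pb_self _ _
      · rw [pb_antisymm, hclos t s h x]
        rw [Finset.sum_eq_zero fun u _ => by rw [hzero t s h ht u]; ring]
        ring
    -- the Jacobi-derived relation
    have star : ∀ x : E N, ξ a c a * (∑ s, ξ a b s * Φ s x)
        = ξ a b a * (∑ s, ξ a c s * Φ s x) := by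
      intro x
      have hj := jacobi (Φ a) (Φ b) (Φ c) (hΦ a) (hΦ b) (hΦ c) x
      have hbc : poissonBracketT (Φ b) (Φ c) = fun _ => (0:ℝ) :=
        funext fun y => hvan b c hab.ne' (hac.ne') y
      have hca : poissonBracketT (Φ c) (Φ a) = fun y => ∑ u, (-ξ a c u) * Φ u y := by
        funext y
        rw [pb_antisymm, hclos a c hac y, ← Finset.sum_neg_distrib]
        exact Finset.sum_congr rfl fun u _ => by ring
      have hab2 : poissonBracketT (Φ a) (Φ b) = fun y => ∑ u, ξ a b u * Φ u y :=
        funext fun y => hclos a b hab y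
      rw [hbc, hca, hab2, pb_right_zero,
        pb_right_combo (Φ b) (fun u => -ξ a c u) Φ x (hΦda x),
        pb_right_combo (Φ c) (ξ a b) Φ x (hΦda x)] at hj
      have e1 : ∑ u, (-ξ a c u) * poissonBracketT (Φ b) (Φ u) x
          = ξ a c a * (∑ s, ξ a b s * Φ s x) := by
        rw [Finset.sum_eq_single a
          (fun u _ hu => by rw [hvan b u hab.ne' hu x]; ring)
          (fun habs => absurd (Finset.mem_univ a) habs)]
        rw [pb_antisymm, hclos a b hab x]; ring
      have e2 : ∑ u, ξ a b u * poissonBracketT (Φ c) (Φ u) x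
          = -(ξ a b a * (∑ s, ξ a c s * Φ s x)) := by
        rw [Finset.sum_eq_single a
          (fun u _ hu => by rw [hvan c u hac.ne' hu x]; ring)
          (fun habs => absurd (Finset.mem_univ a) habs)]
        rw [pb_antisymm, hclos a c hac x]; ring
      rw [e1, e2] at hj
      linarith
    by_cases hA : ξ a b a = 0
    · by_cases hB : ξ a c a = 0
      · rw [expand]
        refine Finset.sum_eq_zero fun s _ => Finset.sum_eq_zero fun t _ => ?_
        by_cases hs : s = a
        · subst hs; rw [hA]; ring
        by_cases ht : t = a
        · subst ht; rw [hB]; ring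
        rw [hvan s t hs ht q0]; ring
      · have hzf : (fun x => ∑ s, ξ a b s * Φ s x) = fun _ => (0:ℝ) := by
          funext x
          have h := star x
          rw [hA, zero_mul] at h
          rcases mul_eq_zero.mp h with h' | h'
          · exact absurd h' hB
          · exact h'
        rw [hzf, pb_left_zero]
    · have heq : (fun x => ∑ s, ξ a c s * Φ s x)
          = fun x => (ξ a c a / ξ a b a) * ∑ s, ξ a b s * Φ s x := by
        funext x
        rw [div_mul_eq_mul_div, eq_div_iff hA]
        linear_combination - star x
      rw [heq, pb_right_smul _ _ _ q0 ((hGd (ξ a b)).differentiableAt), pb_self, mul_zero]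
  -- assemble
  intro a b p c hab hpc q
  rcases lt_trichotomy a p with h | h | h
  · exact auxlt a b p c hab hpc h q
  · subst h
    rcases lt_trichotomy b c with h' | h' | h'
    · exact auxeq a b c hab h' q
    · subst h'; exact pb_self _ _
    · rw [pb_antisymm, auxeq a c b hpc h' q, neg_zero]
  · rw [pb_antisymm, auxlt p c a b hpc hab h q, neg_zero]


lemma solvable_lemma (Φ : Fin N → E N → ℝ) (hΦ : ∀ i, ContDiff ℝ (⊤ : ℕ∞) (Φ i))
    (ξ : Fin N → Fin N → Fin N → ℝ)
    (hclos : ∀ i j : Fin N, i < j → ∀ q, poissonBracketT (Φ i) (Φ j) q = ∑ s, ξ i j s * Φ s q)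
    (hξ : ∀ a b p q i j : Fin N, a < b → p < q → a < p → i < j →
      ξ a b i * ξ p q j = ξ p q i * ξ a b j) :
    ∀ f ∈ Submodule.span ℝ
        {h : E N → ℝ | ∃ f₁ ∈ Submodule.span ℝ (Set.range Φ),
          ∃ f₂ ∈ Submodule.span ℝ (Set.range Φ), h = poissonBracketT f₁ f₂},
      ∀ g ∈ Submodule.span ℝ
        {h : E N → ℝ | ∃ f₁ ∈ Submodule.span ℝ (Set.range Φ),
          ∃ f₂ ∈ Submodule.span ℝ (Set.range Φ), h = poissonBracketT f₁ f₂},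
      ∀ q, poissonBracketT f g q = 0 := by
  have hΦd : ∀ i, Differentiable ℝ (Φ i) := fun i => (hΦ i).differentiable (by simp)
  set GG : Fin N × Fin N → E N → ℝ :=
    fun w => if w.1 < w.2 then (fun x => ∑ s, ξ w.1 w.2 s * Φ s x) else fun _ => (0:ℝ)
    with hGG
  have hGGd : ∀ (w : Fin N × Fin N) (x : E N), DifferentiableAt ℝ (GG w) x := by
    intro w x
    by_cases h : w.1 < w.2
    · simp only [hGG, if_pos h]
      exact (Differentiable.fun_sum fun s _ => (hΦd s).const_mul _).differentiableAt
    · simp only [hGG, if_neg h]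
      exact differentiableAt_const 0
  have hGGvan : ∀ (w w' : Fin N × Fin N) (x : E N), poissonBracketT (GG w) (GG w') x = 0 := by
    intro w w' x
    by_cases h1 : w.1 < w.2
    · by_cases h2 : w'.1 < w'.2
      · simp only [hGG, if_pos h1, if_pos h2]
        exact vanish_main Φ hΦ ξ hclos hξ w.1 w.2 w'.1 w'.2 h1 h2 x
      · simp only [hGG, if_neg h2]
        exact pb_right_zero _ x
    · simp only [hGG, if_neg h1]
      exact pb_left_zero _ x
  -- bracket of two elements of span Φ lies in span GG
  have hsub : {h : E N → ℝ | ∃ f₁ ∈ Submodule.span ℝ (Set.range Φ),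
      ∃ f₂ ∈ Submodule.span ℝ (Set.range Φ), h = poissonBracketT f₁ f₂}
      ⊆ (Submodule.span ℝ (Set.range GG) : Set (E N → ℝ)) := by
    rintro h ⟨f₁, hf₁, f₂, hf₂, rfl⟩
    obtain ⟨cc, hcc⟩ := (Submodule.mem_span_range_iff_exists_fun ℝ).mp hf₁
    obtain ⟨dd, hdd⟩ := (Submodule.mem_span_range_iff_exists_fun ℝ).mp hf₂
    have hfun1 : f₁ = fun x => ∑ i, cc i * Φ i x := by
      rw [← hcc]; funext x
      simp [Finset.sum_apply, Pi.smul_apply, smul_eq_mul]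
    have hfun2 : f₂ = fun x => ∑ i, dd i * Φ i x := by
      rw [← hdd]; funext x
      simp [Finset.sum_apply, Pi.smul_apply, smul_eq_mul]
    have hB : ∀ (i j : Fin N) (x : E N),
        poissonBracketT (Φ i) (Φ j) x = GG (i, j) x - GG (j, i) x := by
      intro i j x
      rcases lt_trichotomy i j with h | h | h
      · simp only [hGG, if_pos h, if_neg (asymm h)]
        rw [hclos i j h x]; ring
      · subst h; simp only [hGG]; rw [pb_self]; ring
      · simp only [hGG, if_pos h, if_neg (asymm h)]
        rw [pb_antisymm, hclos j i h x]; ring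
    have hval : poissonBracketT f₁ f₂ = fun x => ∑ w : Fin N × Fin N,
        (cc w.1 * dd w.2 - cc w.2 * dd w.1) * GG w x := by
      funext x
      rw [hfun1, hfun2, pb_left_combo _ cc Φ x (fun i => (hΦd i) x)]
      calc ∑ i, cc i * poissonBracketT (Φ i) (fun p => ∑ j, dd j * Φ j p) x
          = ∑ i, ∑ j, (cc i * dd j * GG (i, j) x - cc i * dd j * GG (j, i) x) := by
            refine Finset.sum_congr rfl fun i _ => ?_
            rw [pb_right_combo (Φ i) dd Φ x (fun k => (hΦd k) x), Finset.mul_sum]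
            exact Finset.sum_congr rfl fun j _ => by rw [hB i j x]; ring
        _ = (∑ i, ∑ j, cc i * dd j * GG (i, j) x)
            - ∑ i, ∑ j, cc i * dd j * GG (j, i) x := by
            simp only [Finset.sum_sub_distrib]
        _ = (∑ i, ∑ j, cc i * dd j * GG (i, j) x)
            - ∑ i, ∑ j, cc j * dd i * GG (i, j) x := by
            congr 1
            exact Finset.sum_comm
        _ = ∑ i, ∑ j, (cc i * dd j - cc j * dd i) * GG (i, j) x := by
            simp only [← Finset.sum_sub_distrib]
            exact Finset.sum_congr rfl fun i _ =>
              Finset.sum_congr rfl fun j _ => by ring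
        _ = ∑ w : Fin N × Fin N, (cc w.1 * dd w.2 - cc w.2 * dd w.1) * GG w x := by
            rw [Fintype.sum_prod_type]
    rw [hval]
    have hrepr : (fun x => ∑ w : Fin N × Fin N,
        (cc w.1 * dd w.2 - cc w.2 * dd w.1) * GG w x)
        = ∑ w : Fin N × Fin N, (cc w.1 * dd w.2 - cc w.2 * dd w.1) • GG w := by
      funext x
      simp [Finset.sum_apply, Pi.smul_apply, smul_eq_mul]
    rw [hrepr]
    exact Submodule.sum_smul_mem _ _ fun w _ => Submodule.subset_span ⟨w, rfl⟩
  intro f hf g hg q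
  have hf' : f ∈ Submodule.span ℝ (Set.range GG) := Submodule.span_le.mpr hsub hf
  have hg' : g ∈ Submodule.span ℝ (Set.range GG) := Submodule.span_le.mpr hsub hg
  obtain ⟨u, hu⟩ := (Submodule.mem_span_range_iff_exists_fun ℝ).mp hf'
  obtain ⟨v, hv⟩ := (Submodule.mem_span_range_iff_exists_fun ℝ).mp hg'
  have hfe : f = fun x => ∑ w : Fin N × Fin N, u w * GG w x := by
    rw [← hu]; funext x; simp [Finset.sum_apply, Pi.smul_apply, smul_eq_mul]
  have hge : g = fun x => ∑ w : Fin N × Fin N, v w * GG w x := by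
    rw [← hv]; funext x; simp [Finset.sum_apply, Pi.smul_apply, smul_eq_mul]
  rw [hfe, hge, pb_left_combo _ u GG q (fun w => hGGd w q)]
  refine Finset.sum_eq_zero fun w _ => ?_
  rw [pb_right_combo (GG w) v GG q (fun w' => hGGd w' q)]
  rw [Finset.sum_eq_zero fun w' _ => by rw [hGGvan w w' q]; ring]
  ring

end EFIKK

open EFIKK in
/-- **Main theorem (effective first integrals).** Let `ϝ₁,…,ϝ_m` be smooth
first integrals of `H` and `ϝ(λ) = Σ_k ϝ_k λ_k`. If data
`(λ¹,…,λⁿ, ξ^{ij}, r₁,…,r_n)` satisfy (a) the algebraic system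
`(λ^i)ᵀ A λ^j = (ξ^{ij})ᵀ Λ b` identically, (b) `ξ^{ab}_i ξ^{pq}_j = ξ^{pq}_i ξ^{ab}_j`,
(c) `Σ_s r_s ξ^{ij}_s = 0`, and (d) the gradients `∇_{(x,ψ)}ϝ(λ^i)` have rank `n`
on `M_ϝ = {ϝ(λ^i) = r_i}`, then the `F_i := ϝ(λ^i)` are first integrals of `H`
satisfying all the hypotheses of the Kozlov–Kolesnikov theorem on `M_ϝ`:
the linear closure relation, independence on `M_ϝ`, `r·ξ^{ij} = 0`, and
solvability (the derived series of `span{F₁,…,F_n}` reaches `0` at step two). -/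
theorem effective_first_integrals_kozlov_kolesnikov
    (n m : ℕ)
    (H : (Fin n → ℝ) × (Fin n → ℝ) × ℝ → ℝ) (hH : ContDiff ℝ (⊤ : ℕ∞) H)
    (F : Fin m → (Fin n → ℝ) × (Fin n → ℝ) × ℝ → ℝ)
    (hF : ∀ k, ContDiff ℝ (⊤ : ℕ∞) (F k))
    (hfi : ∀ k, ∀ q, fderiv ℝ (F k) q (0, 0, 1) + poissonBracketT H (F k) q = 0)
    (lam : Fin n → Fin m → ℝ) (ξ : Fin n → Fin n → Fin n → ℝ) (r : Fin n → ℝ)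
    -- (a)  (λ^i)ᵀ A(x,ψ,t) λ^j = (ξ^{ij})ᵀ Λ b(x,ψ,t)  identically
    (halg : ∀ i j : Fin n, i < j → ∀ q,
      ∑ p, ∑ s, lam i p * poissonBracketT (F p) (F s) q * lam j s
        = ∑ s, ξ i j s * ∑ k, lam s k * F k q)
    -- (b)  ξ^{ab}_i ξ^{pq}_j = ξ^{pq}_i ξ^{ab}_j
    (hξ : ∀ a b p q i j : Fin n, a < b → p < q → a < p → i < j →
      ξ a b i * ξ p q j = ξ p q i * ξ a b j)
    -- (c)  Σ_s r_s ξ^{ij}_s = 0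
    (hr : ∀ i j : Fin n, i < j → ∑ s, r s * ξ i j s = 0)
    -- (d)  the gradients ∇_{(x,ψ)}ϝ(λ^i) have rank n on M_ϝ
    (hrank : ∀ q : (Fin n → ℝ) × (Fin n → ℝ) × ℝ,
      (∀ i, (∑ k, F k q * lam i k) = r i) →
      LinearIndependent ℝ
        (fun i : Fin n => gradXPsi (fun p => ∑ k, F k p * lam i k) q)) :
    -- each F_i = ϝ(λ^i) is a first integral of H
    (∀ i : Fin n, ∀ q,
      fderiv ℝ (fun p => ∑ k, F k p * lam i k) q (0, 0, 1)
        + poissonBracketT H (fun p => ∑ k, F k p * lam i k) q = 0) ∧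
    -- the Kozlov–Kolesnikov linear closure relation
    (∀ i j : Fin n, i < j → ∀ q,
      poissonBracketT (fun p => ∑ k, F k p * lam i k)
          (fun p => ∑ k, F k p * lam j k) q
        = ∑ s, ξ i j s * ∑ k, F k q * lam s k) ∧
    -- independence on M_ϝ
    (∀ q : (Fin n → ℝ) × (Fin n → ℝ) × ℝ,
      (∀ i, (∑ k, F k q * lam i k) = r i) →
      LinearIndependent ℝ
        (fun i : Fin n => gradXPsi (fun p => ∑ k, F k p * lam i k) q)) ∧
    -- (r₁,…,r_n)·ξ^{ij} = 0
    (∀ i j : Fin n, i < j → ∑ s, r s * ξ i j s = 0) ∧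
    -- the span of {F₁,…,F_n} is solvable: [[L,L],[L,L]] = 0
    (∀ f ∈ Submodule.span ℝ
        {h : (Fin n → ℝ) × (Fin n → ℝ) × ℝ → ℝ |
          ∃ f₁ ∈ Submodule.span ℝ
              (Set.range (fun i : Fin n => fun p => ∑ k, F k p * lam i k)),
            ∃ f₂ ∈ Submodule.span ℝ
              (Set.range (fun i : Fin n => fun p => ∑ k, F k p * lam i k)),
            h = poissonBracketT f₁ f₂},
      ∀ g ∈ Submodule.span ℝ
        {h : (Fin n → ℝ) × (Fin n → ℝ) × ℝ → ℝ |
          ∃ f₁ ∈ Submodule.span ℝ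
              (Set.range (fun i : Fin n => fun p => ∑ k, F k p * lam i k)),
            ∃ f₂ ∈ Submodule.span ℝ
              (Set.range (fun i : Fin n => fun p => ∑ k, F k p * lam i k)),
            h = poissonBracketT f₁ f₂},
      ∀ q, poissonBracketT f g q = 0) := by
  have hFd : ∀ k, Differentiable ℝ (F k) := fun k => (hF k).differentiable (by simp)
  have hfun : ∀ i : Fin n, (fun p => ∑ k, F k p * lam i k)
      = (fun p => ∑ k, lam i k * F k p) :=
    fun i => funext fun p => Finset.sum_congr rfl fun k _ => mul_comm _ _
  have hΦ : ∀ i : Fin n, ContDiff ℝ (⊤ : ℕ∞) (fun p => ∑ k, lam i k * F k p) :=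
    fun i => ContDiff.sum fun k _ => contDiff_const.mul (hF k)
  have hclos : ∀ i j : Fin n, i < j → ∀ q,
      poissonBracketT (fun p => ∑ k, lam i k * F k p)
        (fun p => ∑ k, lam j k * F k p) q
      = ∑ s, ξ i j s * ∑ k, lam s k * F k q := by
    intro i j hij q
    rw [pb_left_combo _ (lam i) F q (fun k => (hFd k) q)]
    have step : ∀ p0 : Fin m,
        poissonBracketT (F p0) (fun x => ∑ k, lam j k * F k x) q
          = ∑ s, lam j s * poissonBracketT (F p0) (F s) q :=
      fun p0 => pb_right_combo (F p0) (lam j) F q (fun k => (hFd k) q)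
    simp only [step]
    calc ∑ p, lam i p * ∑ s, lam j s * poissonBracketT (F p) (F s) q
        = ∑ p, ∑ s, lam i p * poissonBracketT (F p) (F s) q * lam j s := by
          refine Finset.sum_congr rfl fun p _ => ?_
          rw [Finset.mul_sum]
          exact Finset.sum_congr rfl fun s _ => by ring
      _ = ∑ s, ξ i j s * ∑ k, lam s k * F k q := halg i j hij q
  refine ⟨?_, ?_, hrank, hr, ?_⟩
  · -- first integrals
    intro i q
    rw [hfun i, fderiv_combo (lam i) F q (fun k => (hFd k) q),
      pb_right_combo H (lam i) F q (fun k => (hFd k) q)]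
    simp only [ContinuousLinearMap.sum_apply, ContinuousLinearMap.smul_apply, smul_eq_mul]
    rw [← Finset.sum_add_distrib]
    exact Finset.sum_eq_zero fun k _ => by linear_combination lam i k * hfi k q
  · -- closure relation
    intro i j hij q
    rw [hfun i, hfun j, hclos i j hij q]
    refine Finset.sum_congr rfl fun s _ => ?_
    congr 1
    exact Finset.sum_congr rfl fun k _ => mul_comm _ _
  · -- solvability
    have hfam : (fun i : Fin n => fun p => ∑ k, F k p * lam i k)
        = (fun i : Fin n => fun p => ∑ k, lam i k * F k p) := funext hfun
    simp only [hfam]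
    exact solvable_lemma (fun i p => ∑ k, lam i k * F k p) hΦ ξ hclos hξ
end

section
/- Let H : ℝ³×ℝ³ → ℝ be the true Hamiltonian of the Dubins car problem, H(x,ψ) = ½[ (ψ₁ cos x₃ + ψ₂ sin x₃)² + ψ₃² ]. Then the three functions ψ₁, ψ₂ and F(x,ψ) = −ψ₁x₂ + ψ₂x₁ + ψ₃ are first integrals of H, i.e. {H,ψ₁} = 0, {H,ψ₂} = 0 and {H,F} = 0 identically on ℝ³×ℝ³. -/
open Finset Real

/-- Canonical Poisson bracket of two functions of `(x, ψ) ∈ ℝⁿ × ℝⁿ`: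
`{f,g} = Σᵢ (∂f/∂ψᵢ ∂g/∂xᵢ − ∂f/∂xᵢ ∂g/∂ψᵢ)`. -/
noncomputable def poissonBracket {n : ℕ}
    (f g : (Fin n → ℝ) × (Fin n → ℝ) → ℝ)
    (p : (Fin n → ℝ) × (Fin n → ℝ)) : ℝ :=
  ∑ i, (fderiv ℝ f p (0, Pi.single i 1) * fderiv ℝ g p (Pi.single i 1, 0)
      - fderiv ℝ f p (Pi.single i 1, 0) * fderiv ℝ g p (0, Pi.single i 1))

abbrev DubinsE := (Fin 3 → ℝ) × (Fin 3 → ℝ)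

noncomputable def dubinsPx (i : Fin 3) : DubinsE →L[ℝ] ℝ :=
  (ContinuousLinearMap.proj i).comp (ContinuousLinearMap.fst ℝ (Fin 3 → ℝ) (Fin 3 → ℝ))
noncomputable def dubinsPψ (i : Fin 3) : DubinsE →L[ℝ] ℝ :=
  (ContinuousLinearMap.proj i).comp (ContinuousLinearMap.snd ℝ (Fin 3 → ℝ) (Fin 3 → ℝ))

lemma dubinsPx_apply (i : Fin 3) (v : DubinsE) : dubinsPx i v = v.1 i := rfl
lemma dubinsPψ_apply (i : Fin 3) (v : DubinsE) : dubinsPψ i v = v.2 i := rfl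

lemma fderiv_dubinsH_apply (p v : DubinsE) :
    fderiv ℝ (fun q : DubinsE => (1/2 : ℝ) * ((q.2 0 * Real.cos (q.1 2) + q.2 1 * Real.sin (q.1 2)) ^ 2 + (q.2 2) ^ 2)) p v
    = (p.2 0 * Real.cos (p.1 2) + p.2 1 * Real.sin (p.1 2)) *
        (v.2 0 * Real.cos (p.1 2) - p.2 0 * Real.sin (p.1 2) * v.1 2
          + v.2 1 * Real.sin (p.1 2) + p.2 1 * Real.cos (p.1 2) * v.1 2)
      + p.2 2 * v.2 2 := by
  have hx2 : HasFDerivAt (fun q : DubinsE => q.1 2) (dubinsPx 2) p := (dubinsPx 2).hasFDerivAt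
  have h20 : HasFDerivAt (fun q : DubinsE => q.2 0) (dubinsPψ 0) p := (dubinsPψ 0).hasFDerivAt
  have h21 : HasFDerivAt (fun q : DubinsE => q.2 1) (dubinsPψ 1) p := (dubinsPψ 1).hasFDerivAt
  have h22 : HasFDerivAt (fun q : DubinsE => q.2 2) (dubinsPψ 2) p := (dubinsPψ 2).hasFDerivAt
  have hA := (h20.mul hx2.cos).add (h21.mul hx2.sin)
  have hH := (((hA.mul hA).add (h22.mul h22)).const_mul (1/2 : ℝ))
  have heq : (fun q : DubinsE => (1/2 : ℝ) * ((q.2 0 * Real.cos (q.1 2) + q.2 1 * Real.sin (q.1 2)) ^ 2 + (q.2 2) ^ 2))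
      = fun q : DubinsE => (1/2 : ℝ) * ((q.2 0 * Real.cos (q.1 2) + q.2 1 * Real.sin (q.1 2)) * (q.2 0 * Real.cos (q.1 2) + q.2 1 * Real.sin (q.1 2)) + q.2 2 * q.2 2) := by
    funext q; ring
  rw [heq, HasFDerivAt.fderiv (f := fun q : DubinsE => (1/2 : ℝ) * ((q.2 0 * Real.cos (q.1 2) + q.2 1 * Real.sin (q.1 2)) * (q.2 0 * Real.cos (q.1 2) + q.2 1 * Real.sin (q.1 2)) + q.2 2 * q.2 2)) hH]
  simp [dubinsPx_apply, dubinsPψ_apply]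
  ring

lemma fderiv_dubinsF_apply (p v : DubinsE) :
    fderiv ℝ (fun q : DubinsE => - q.2 0 * q.1 1 + q.2 1 * q.1 0 + q.2 2) p v
    = - v.2 0 * p.1 1 - p.2 0 * v.1 1 + v.2 1 * p.1 0 + p.2 1 * v.1 0 + v.2 2 := by
  have hx0 : HasFDerivAt (fun q : DubinsE => q.1 0) (dubinsPx 0) p := (dubinsPx 0).hasFDerivAt
  have hx1 : HasFDerivAt (fun q : DubinsE => q.1 1) (dubinsPx 1) p := (dubinsPx 1).hasFDerivAt
  have h20 : HasFDerivAt (fun q : DubinsE => q.2 0) (dubinsPψ 0) p := (dubinsPψ 0).hasFDerivAt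
  have h21 : HasFDerivAt (fun q : DubinsE => q.2 1) (dubinsPψ 1) p := (dubinsPψ 1).hasFDerivAt
  have h22 : HasFDerivAt (fun q : DubinsE => q.2 2) (dubinsPψ 2) p := (dubinsPψ 2).hasFDerivAt
  have hF := ((h20.neg.mul hx1).add (h21.mul hx0)).add h22
  rw [HasFDerivAt.fderiv (f := fun q : DubinsE => - q.2 0 * q.1 1 + q.2 1 * q.1 0 + q.2 2) hF]
  simp [dubinsPx_apply, dubinsPψ_apply]
  ring

/-- For the true Hamiltonian of the Dubins car,
`H(x,ψ) = ½[(ψ₁ cos x₃ + ψ₂ sin x₃)² + ψ₃²]`, the functions `ψ₁`, `ψ₂` and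
`F = −ψ₁x₂ + ψ₂x₁ + ψ₃` are first integrals: their Poisson brackets with `H`
vanish identically on `ℝ³ × ℝ³`. -/
theorem dubins_car_first_integrals
    (H : (Fin 3 → ℝ) × (Fin 3 → ℝ) → ℝ)
    (hH : ∀ p : (Fin 3 → ℝ) × (Fin 3 → ℝ),
      H p = (1 / 2) * ((p.2 0 * Real.cos (p.1 2) + p.2 1 * Real.sin (p.1 2)) ^ 2
        + (p.2 2) ^ 2)) :
    (∀ p : (Fin 3 → ℝ) × (Fin 3 → ℝ),
      poissonBracket H (fun q => q.2 0) p = 0) ∧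
    (∀ p : (Fin 3 → ℝ) × (Fin 3 → ℝ),
      poissonBracket H (fun q => q.2 1) p = 0) ∧
    (∀ p : (Fin 3 → ℝ) × (Fin 3 → ℝ),
      poissonBracket H (fun q => - q.2 0 * q.1 1 + q.2 1 * q.1 0 + q.2 2) p = 0) := by
  have hHe : H = fun q : DubinsE => (1/2 : ℝ) * ((q.2 0 * Real.cos (q.1 2) + q.2 1 * Real.sin (q.1 2)) ^ 2 + (q.2 2) ^ 2) := funext hH
  subst hHe
  have hg0 : ∀ v : DubinsE, ∀ p : DubinsE, fderiv ℝ (fun q : DubinsE => q.2 0) p v = v.2 0 := by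
    intro v p
    have h : HasFDerivAt (fun q : DubinsE => q.2 0) (dubinsPψ 0) p := (dubinsPψ 0).hasFDerivAt
    rw [h.fderiv]; rfl
  have hg1 : ∀ v : DubinsE, ∀ p : DubinsE, fderiv ℝ (fun q : DubinsE => q.2 1) p v = v.2 1 := by
    intro v p
    have h : HasFDerivAt (fun q : DubinsE => q.2 1) (dubinsPψ 1) p := (dubinsPψ 1).hasFDerivAt
    rw [h.fderiv]; rfl
  refine ⟨fun p => ?_, fun p => ?_, fun p => ?_⟩ <;>
  · simp only [poissonBracket, Fin.sum_univ_three, fderiv_dubinsH_apply,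
      fderiv_dubinsF_apply, hg0, hg1]
    simp [Pi.single_apply]
    try ring
end

section
/- On ℝ⁴×ℝ⁴ with coordinates (x₁,x₂,x₃,x₄,ψ₁,ψ₂,ψ₃,ψ₄), the functions G₁(x,ψ) = −ψ₁x₂ + ψ₂x₁ + ψ₃ + ψ₄, G₂ = ψ₂ and G₃ = ψ₁ satisfy the Poisson bracket relations {G₁,G₂} = G₃, {G₁,G₃} = −G₂ and {G₂,G₃} = 0 (so each bracket is a constant-coefficient linear combination of G₁, G₂, G₃), and consequently the real span of {G₁,G₂,G₃} is a finite-dimensional Lie algebra under the Poisson bracket whose derived algebra span{G₂,G₃} is abelian; in particular this Lie algebra is solvable. -/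
open Finset

noncomputable abbrev px (i : Fin 4) : ((Fin 4 → ℝ) × (Fin 4 → ℝ)) →L[ℝ] ℝ :=
  (ContinuousLinearMap.proj i).comp (ContinuousLinearMap.fst ℝ (Fin 4 → ℝ) (Fin 4 → ℝ))
noncomputable abbrev pψ (i : Fin 4) : ((Fin 4 → ℝ) × (Fin 4 → ℝ)) →L[ℝ] ℝ :=
  (ContinuousLinearMap.proj i).comp (ContinuousLinearMap.snd ℝ (Fin 4 → ℝ) (Fin 4 → ℝ))

lemma hx (i : Fin 4) (p) : HasFDerivAt (fun q : (Fin 4 → ℝ) × (Fin 4 → ℝ) => q.1 i) (px i) p :=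
  (px i).hasFDerivAt
lemma hψ (i : Fin 4) (p) : HasFDerivAt (fun q : (Fin 4 → ℝ) × (Fin 4 → ℝ) => q.2 i) (pψ i) p :=
  (pψ i).hasFDerivAt

lemma hG1' (p : (Fin 4 → ℝ) × (Fin 4 → ℝ)) :
    HasFDerivAt (fun q : (Fin 4 → ℝ) × (Fin 4 → ℝ) =>
      - q.2 0 * q.1 1 + q.2 1 * q.1 0 + q.2 2 + q.2 3)
      ((-(p.2 0 • px 1 + p.1 1 • pψ 0) + (p.2 1 • px 0 + p.1 0 • pψ 1)) + pψ 2 + pψ 3) p := by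
  have h1 := ((hψ 0 p).mul (hx 1 p)).neg
  have h2 := (hψ 1 p).mul (hx 0 p)
  have := ((h1.add h2).add (hψ 2 p)).add (hψ 3 p)
  refine this.congr_of_eventuallyEq (Filter.Eventually.of_forall fun q => ?_)
  simp only [Pi.add_apply, Pi.neg_apply, Pi.mul_apply]; ring

lemma span_deriv (f : (Fin 4 → ℝ) × (Fin 4 → ℝ) → ℝ)
    (hf : ∃ a b : ℝ, ∀ q : (Fin 4 → ℝ) × (Fin 4 → ℝ), f q = a * q.2 1 + b * q.2 0)
    (p : (Fin 4 → ℝ) × (Fin 4 → ℝ)) (i : Fin 4) :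
    fderiv ℝ f p (Pi.single i 1, 0) = 0 := by
  obtain ⟨a, b, hab⟩ := hf
  obtain rfl : f = fun q => a * q.2 1 + b * q.2 0 := funext hab
  have h : HasFDerivAt (fun q : (Fin 4 → ℝ) × (Fin 4 → ℝ) => a * q.2 1 + b * q.2 0)
      (a • pψ 1 + b • pψ 0) p := by
    have := (((pψ 1).hasFDerivAt (x := p)).const_smul a).add (((pψ 0).hasFDerivAt (x := p)).const_smul b)
    exact this
  rw [h.fderiv] ; simp


/-- On `ℝ⁴ × ℝ⁴`, the first integrals of the car-with-one-trailer problem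
`G₁ = −ψ₁x₂ + ψ₂x₁ + ψ₃ + ψ₄`, `G₂ = ψ₂`, `G₃ = ψ₁` satisfy
`{G₁,G₂} = G₃`, `{G₁,G₃} = −G₂`, `{G₂,G₃} = 0`; consequently the span of
`{G₁,G₂,G₃}` is a solvable Lie algebra under the Poisson bracket whose derived
algebra `span{G₂,G₃}` is abelian. -/
theorem car_with_trailer_lie_algebra
    (G₁ G₂ G₃ : (Fin 4 → ℝ) × (Fin 4 → ℝ) → ℝ)
    (hG₁ : ∀ p : (Fin 4 → ℝ) × (Fin 4 → ℝ),
      G₁ p = - p.2 0 * p.1 1 + p.2 1 * p.1 0 + p.2 2 + p.2 3)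
    (hG₂ : ∀ p : (Fin 4 → ℝ) × (Fin 4 → ℝ), G₂ p = p.2 1)
    (hG₃ : ∀ p : (Fin 4 → ℝ) × (Fin 4 → ℝ), G₃ p = p.2 0) :
    (∀ p, poissonBracket G₁ G₂ p = G₃ p) ∧
    (∀ p, poissonBracket G₁ G₃ p = - G₂ p) ∧
    (∀ p, poissonBracket G₂ G₃ p = 0) ∧
    -- the derived algebra span{G₂,G₃} is abelian
    (∀ f ∈ Submodule.span ℝ ({G₂, G₃} : Set ((Fin 4 → ℝ) × (Fin 4 → ℝ) → ℝ)),
     ∀ g ∈ Submodule.span ℝ ({G₂, G₃} : Set ((Fin 4 → ℝ) × (Fin 4 → ℝ) → ℝ)),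
     ∀ p, poissonBracket f g p = 0) := by
  obtain rfl : G₁ = fun q => - q.2 0 * q.1 1 + q.2 1 * q.1 0 + q.2 2 + q.2 3 := funext hG₁
  obtain rfl : G₂ = fun q => q.2 1 := funext hG₂
  obtain rfl : G₃ = fun q => q.2 0 := funext hG₃
  have h2 : ∀ p, fderiv ℝ (fun q : (Fin 4 → ℝ) × (Fin 4 → ℝ) => q.2 1) p = pψ 1 :=
    fun p => (hψ 1 p).fderiv
  have h3 : ∀ p, fderiv ℝ (fun q : (Fin 4 → ℝ) × (Fin 4 → ℝ) => q.2 0) p = pψ 0 :=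
    fun p => (hψ 0 p).fderiv
  refine ⟨?_, ?_, ?_, ?_⟩
  · intro p
    simp only [poissonBracket, (hG1' p).fderiv, h2, Fin.sum_univ_four]
    simp [Pi.single_apply]
  · intro p
    simp only [poissonBracket, (hG1' p).fderiv, h3, Fin.sum_univ_four]
    simp [Pi.single_apply]
  · intro p
    simp only [poissonBracket, h2, h3, Fin.sum_univ_four]
    simp [Pi.single_apply]
  · intro f hf g hg p
    have key : ∀ h ∈ Submodule.span ℝ
        ({fun q : (Fin 4 → ℝ) × (Fin 4 → ℝ) => q.2 1, fun q => q.2 0} :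
          Set ((Fin 4 → ℝ) × (Fin 4 → ℝ) → ℝ)),
        ∃ a b : ℝ, ∀ q : (Fin 4 → ℝ) × (Fin 4 → ℝ), h q = a * q.2 1 + b * q.2 0 := by
      intro h hh
      rw [Submodule.mem_span_pair] at hh
      obtain ⟨a, b, hab⟩ := hh
      exact ⟨a, b, fun q => by rw [← hab]; simp⟩
    have hfz := span_deriv f (key f hf) p
    have hgz := span_deriv g (key g hg) p
    simp [poissonBracket, hfz, hgz]
end

section
/- Fix α ∈ ℝ, α ≠ 0, and let H : {(x,ψ) ∈ ℝ³×ℝ³ : 1 + αx₁ ≠ 0} → ℝ be the true Hamiltonian of the flat Martinet problem, H(x,ψ) = ¼[ (ψ₁ + ψ₃x₂²)² + ψ₂²/(1+αx₁)² ]. Then: (i) the function G(x,ψ) = (1/α + x₁)ψ₁ + x₃ψ₃ satisfies {H,G} = 2H identically; (ii) consequently F₂(x,ψ,t) = (1/α + x₁)ψ₁ + x₃ψ₃ − 2tH(x,ψ) is a nonautonomous first integral of H, i.e. ∂F₂/∂t + {H,F₂} = 0; and (iii) F₁ = H and F₃ = ψ₃ are first integrals of H, i.e. {H,ψ₃} =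 0. -/
open Finset

namespace FlatMartinetAux

abbrev E := (Fin 3 → ℝ) × (Fin 3 → ℝ)
abbrev E' := (Fin 3 → ℝ) × (Fin 3 → ℝ) × ℝ

noncomputable def X (i : Fin 3) : E →L[ℝ] ℝ :=
  (ContinuousLinearMap.proj i).comp (ContinuousLinearMap.fst ℝ (Fin 3 → ℝ) (Fin 3 → ℝ))
noncomputable def P (i : Fin 3) : E →L[ℝ] ℝ :=
  (ContinuousLinearMap.proj i).comp (ContinuousLinearMap.snd ℝ (Fin 3 → ℝ) (Fin 3 → ℝ))

noncomputable def X' (i : Fin 3) : E' →L[ℝ] ℝ :=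
  (ContinuousLinearMap.proj i).comp (ContinuousLinearMap.fst ℝ (Fin 3 → ℝ) ((Fin 3 → ℝ) × ℝ))
noncomputable def P' (i : Fin 3) : E' →L[ℝ] ℝ :=
  ((ContinuousLinearMap.proj i).comp
    (ContinuousLinearMap.fst ℝ (Fin 3 → ℝ) ℝ)).comp
    (ContinuousLinearMap.snd ℝ (Fin 3 → ℝ) ((Fin 3 → ℝ) × ℝ))
noncomputable def T : E' →L[ℝ] ℝ :=
  (ContinuousLinearMap.snd ℝ (Fin 3 → ℝ) ℝ).comp
    (ContinuousLinearMap.snd ℝ (Fin 3 → ℝ) ((Fin 3 → ℝ) × ℝ))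

lemma fderivH {α : ℝ} (p : E) (hp : 1 + α * p.1 0 ≠ 0) (v : E) :
    fderiv ℝ (fun q : E => (1 / 4 : ℝ) * ((q.2 0 + q.2 2 * (q.1 1) ^ 2) ^ 2
        + (q.2 1) ^ 2 / (1 + α * q.1 0) ^ 2)) p v
    = (1/2) * (p.2 0 + p.2 2 * (p.1 1)^2) * (v.2 0 + v.2 2 * (p.1 1)^2 + p.2 2 * (2 * p.1 1 * v.1 1))
      + (1/2) * p.2 1 * v.2 1 / (1 + α * p.1 0)^2
      - (1/2) * (p.2 1)^2 * α * v.1 0 / (1 + α * p.1 0)^3 := by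
  have heq : (fun q : E => (1 / 4 : ℝ) * ((q.2 0 + q.2 2 * (q.1 1) ^ 2) ^ 2
        + (q.2 1) ^ 2 / (1 + α * q.1 0) ^ 2))
      = (fun q : E => (1/4 : ℝ) * ((q.2 0 + q.2 2 * (q.1 1 * q.1 1)) * (q.2 0 + q.2 2 * (q.1 1 * q.1 1))
        + (q.2 1 * q.2 1) * ((1 + α * q.1 0) * (1 + α * q.1 0))⁻¹)) := by
    funext q; ring
  rw [heq]
  have hx : ∀ i, HasFDerivAt (fun q : E => q.1 i) (X i) p := fun i => (X i).hasFDerivAt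
  have hpsi : ∀ i, HasFDerivAt (fun q : E => q.2 i) (P i) p := fun i => (P i).hasFDerivAt
  have hA : HasFDerivAt (fun q : E => q.2 0 + q.2 2 * (q.1 1 * q.1 1)) _ p :=
    (hpsi 0).add ((hpsi 2).mul ((hx 1).mul (hx 1)))
  have hB : HasFDerivAt (fun q : E => 1 + α * q.1 0) _ p :=
    (((hx 0).const_mul α).const_add 1)
  have hB2 : HasFDerivAt (fun q : E => (1 + α * q.1 0) * (1 + α * q.1 0)) _ p := hB.mul hB
  have hB2ne : (1 + α * p.1 0) * (1 + α * p.1 0) ≠ 0 := mul_ne_zero hp hp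
  have hinv : HasFDerivAt (fun q : E => ((1 + α * q.1 0) * (1 + α * q.1 0))⁻¹) _ p :=
    (hasFDerivAt_inv hB2ne).comp p hB2
  have hF := ((hA.mul hA).add (((hpsi 1).mul (hpsi 1)).mul hinv)).const_mul (1/4 : ℝ)
  erw [hF.fderiv]
  simp [X, P, ContinuousLinearMap.comp_apply]
  field_simp
  ring

lemma fderivG {α : ℝ} (p : E) (v : E) :
    fderiv ℝ (fun q : E => (1 / α + q.1 0) * q.2 0 + q.1 2 * q.2 2) p v
    = v.1 0 * p.2 0 + (1 / α + p.1 0) * v.2 0 + v.1 2 * p.2 2 + p.1 2 * v.2 2 := by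
  have hx : ∀ i, HasFDerivAt (fun q : E => q.1 i) (X i) p := fun i => (X i).hasFDerivAt
  have hpsi : ∀ i, HasFDerivAt (fun q : E => q.2 i) (P i) p := fun i => (P i).hasFDerivAt
  have hF := (((hx 0).const_add (1/α)).mul (hpsi 0)).add ((hx 2).mul (hpsi 2))
  erw [hF.fderiv]
  simp [X, P, ContinuousLinearMap.comp_apply]
  ring

lemma fderivH' {α : ℝ} (p : E') (hp : 1 + α * p.1 0 ≠ 0) (v : E') :
    fderiv ℝ (fun q : E' => (1 / 4 : ℝ) * ((q.2.1 0 + q.2.1 2 * (q.1 1) ^ 2) ^ 2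
        + (q.2.1 1) ^ 2 / (1 + α * q.1 0) ^ 2)) p v
    = (1/2) * (p.2.1 0 + p.2.1 2 * (p.1 1)^2) * (v.2.1 0 + v.2.1 2 * (p.1 1)^2 + p.2.1 2 * (2 * p.1 1 * v.1 1))
      + (1/2) * p.2.1 1 * v.2.1 1 / (1 + α * p.1 0)^2
      - (1/2) * (p.2.1 1)^2 * α * v.1 0 / (1 + α * p.1 0)^3 := by
  have heq : (fun q : E' => (1 / 4 : ℝ) * ((q.2.1 0 + q.2.1 2 * (q.1 1) ^ 2) ^ 2
        + (q.2.1 1) ^ 2 / (1 + α * q.1 0) ^ 2))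
      = (fun q : E' => (1/4 : ℝ) * ((q.2.1 0 + q.2.1 2 * (q.1 1 * q.1 1)) * (q.2.1 0 + q.2.1 2 * (q.1 1 * q.1 1))
        + (q.2.1 1 * q.2.1 1) * ((1 + α * q.1 0) * (1 + α * q.1 0))⁻¹)) := by
    funext q; ring
  rw [heq]
  have hx : ∀ i, HasFDerivAt (fun q : E' => q.1 i) (X' i) p := fun i => (X' i).hasFDerivAt
  have hpsi : ∀ i, HasFDerivAt (fun q : E' => q.2.1 i) (P' i) p := fun i => (P' i).hasFDerivAt
  have hA : HasFDerivAt (fun q : E' => q.2.1 0 + q.2.1 2 * (q.1 1 * q.1 1)) _ p :=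
    (hpsi 0).add ((hpsi 2).mul ((hx 1).mul (hx 1)))
  have hB : HasFDerivAt (fun q : E' => 1 + α * q.1 0) _ p :=
    (((hx 0).const_mul α).const_add 1)
  have hB2 : HasFDerivAt (fun q : E' => (1 + α * q.1 0) * (1 + α * q.1 0)) _ p := hB.mul hB
  have hB2ne : (1 + α * p.1 0) * (1 + α * p.1 0) ≠ 0 := mul_ne_zero hp hp
  have hinv : HasFDerivAt (fun q : E' => ((1 + α * q.1 0) * (1 + α * q.1 0))⁻¹) _ p :=
    (hasFDerivAt_inv hB2ne).comp p hB2
  have hF := ((hA.mul hA).add (((hpsi 1).mul (hpsi 1)).mul hinv)).const_mul (1/4 : ℝ)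
  erw [hF.fderiv]
  simp [X', P', ContinuousLinearMap.comp_apply]
  field_simp
  ring

lemma fderivF2 {α : ℝ} (p : E') (hp : 1 + α * p.1 0 ≠ 0) (v : E') :
    fderiv ℝ (fun q : E' => (1 / α + q.1 0) * q.2.1 0 + q.1 2 * q.2.1 2
        - 2 * q.2.2 * ((1 / 4 : ℝ) * ((q.2.1 0 + q.2.1 2 * (q.1 1) ^ 2) ^ 2
          + (q.2.1 1) ^ 2 / (1 + α * q.1 0) ^ 2))) p v
    = v.1 0 * p.2.1 0 + (1 / α + p.1 0) * v.2.1 0 + v.1 2 * p.2.1 2 + p.1 2 * v.2.1 2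
      - 2 * (v.2.2 * ((1 / 4 : ℝ) * ((p.2.1 0 + p.2.1 2 * (p.1 1) ^ 2) ^ 2
          + (p.2.1 1) ^ 2 / (1 + α * p.1 0) ^ 2))
        + p.2.2 * ((1/2) * (p.2.1 0 + p.2.1 2 * (p.1 1)^2) * (v.2.1 0 + v.2.1 2 * (p.1 1)^2 + p.2.1 2 * (2 * p.1 1 * v.1 1))
          + (1/2) * p.2.1 1 * v.2.1 1 / (1 + α * p.1 0)^2
          - (1/2) * (p.2.1 1)^2 * α * v.1 0 / (1 + α * p.1 0)^3)) := by
  have heq : (fun q : E' => (1 / α + q.1 0) * q.2.1 0 + q.1 2 * q.2.1 2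
        - 2 * q.2.2 * ((1 / 4 : ℝ) * ((q.2.1 0 + q.2.1 2 * (q.1 1) ^ 2) ^ 2
          + (q.2.1 1) ^ 2 / (1 + α * q.1 0) ^ 2)))
      = (fun q : E' => ((1 / α + q.1 0) * q.2.1 0 + q.1 2 * q.2.1 2)
        - (fun r : E' => r.2.2 * ((1 / 4 : ℝ) * ((r.2.1 0 + r.2.1 2 * (r.1 1) ^ 2) ^ 2
          + (r.2.1 1) ^ 2 / (1 + α * r.1 0) ^ 2))) q * 2) := by
    funext q; ring
  rw [heq]
  have hx : ∀ i, HasFDerivAt (fun q : E' => q.1 i) (X' i) p := fun i => (X' i).hasFDerivAt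
  have hpsi : ∀ i, HasFDerivAt (fun q : E' => q.2.1 i) (P' i) p := fun i => (P' i).hasFDerivAt
  have ht : HasFDerivAt (fun q : E' => q.2.2) T p := T.hasFDerivAt
  have hHd : DifferentiableAt ℝ (fun q : E' => (1 / 4 : ℝ) * ((q.2.1 0 + q.2.1 2 * (q.1 1) ^ 2) ^ 2
      + (q.2.1 1) ^ 2 / (1 + α * q.1 0) ^ 2)) p := by
    have heq2 : (fun q : E' => (1 / 4 : ℝ) * ((q.2.1 0 + q.2.1 2 * (q.1 1) ^ 2) ^ 2
          + (q.2.1 1) ^ 2 / (1 + α * q.1 0) ^ 2))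
        = (fun q : E' => (1/4 : ℝ) * ((q.2.1 0 + q.2.1 2 * (q.1 1 * q.1 1)) * (q.2.1 0 + q.2.1 2 * (q.1 1 * q.1 1))
          + (q.2.1 1 * q.2.1 1) * ((1 + α * q.1 0) * (1 + α * q.1 0))⁻¹)) := by
      funext q; ring
    rw [heq2]
    have hB : HasFDerivAt (fun q : E' => 1 + α * q.1 0) _ p :=
      (((hx 0).const_mul α).const_add 1)
    have hB2 : HasFDerivAt (fun q : E' => (1 + α * q.1 0) * (1 + α * q.1 0)) _ p := hB.mul hB
    have hB2ne : (1 + α * p.1 0) * (1 + α * p.1 0) ≠ 0 := mul_ne_zero hp hp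
    have hA : HasFDerivAt (fun q : E' => q.2.1 0 + q.2.1 2 * (q.1 1 * q.1 1)) _ p :=
      (hpsi 0).add ((hpsi 2).mul ((hx 1).mul (hx 1)))
    exact (((hA.mul hA).add (((hpsi 1).mul (hpsi 1)).mul
      ((hasFDerivAt_inv hB2ne).comp p hB2))).const_mul (1/4 : ℝ)).differentiableAt
  have hG : HasFDerivAt (fun q : E' => (1 / α + q.1 0) * q.2.1 0 + q.1 2 * q.2.1 2) _ p :=
    (((hx 0).const_add (1/α)).mul (hpsi 0)).add ((hx 2).mul (hpsi 2))
  have hHH := hHd.hasFDerivAt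
  have hF := hG.sub ((ht.mul hHH).mul_const (2:ℝ))
  erw [hF.fderiv]
  have hval := fderivH' (α := α) p hp v
  simp only [ContinuousLinearMap.sub_apply, ContinuousLinearMap.add_apply,
    ContinuousLinearMap.smul_apply, ContinuousLinearMap.coe_smul', Pi.smul_apply,
    smul_eq_mul]
  rw [hval]
  simp [X', P', T, ContinuousLinearMap.comp_apply]
  ring

end FlatMartinetAux

/-- For the true Hamiltonian of the flat Martinet problem with `α ≠ 0`,
`H(x,ψ) = ¼[(ψ₁ + ψ₃x₂²)² + ψ₂²/(1+αx₁)²]` (on the region `1 + αx₁ ≠ 0`):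
(i) `G = (1/α + x₁)ψ₁ + x₃ψ₃` satisfies `{H,G} = 2H`;
(ii) consequently `F₂(x,ψ,t) = (1/α + x₁)ψ₁ + x₃ψ₃ − 2tH(x,ψ)` is a
nonautonomous first integral of `H`, i.e. `∂F₂/∂t + {H,F₂} = 0`;
(iii) `F₁ = H` and `F₃ = ψ₃` are first integrals of `H`, i.e. `{H,ψ₃} = 0`
(and trivially `{H,H} = 0`). -/
theorem flat_martinet_effective_first_integrals
    (α : ℝ) (hα : α ≠ 0)
    (H : (Fin 3 → ℝ) × (Fin 3 → ℝ) → ℝ)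
    (hH : ∀ p : (Fin 3 → ℝ) × (Fin 3 → ℝ),
      H p = (1 / 4) * ((p.2 0 + p.2 2 * (p.1 1) ^ 2) ^ 2
        + (p.2 1) ^ 2 / (1 + α * p.1 0) ^ 2)) :
    -- (i)  {H, G} = 2H  on the domain 1 + αx₁ ≠ 0
    (∀ p : (Fin 3 → ℝ) × (Fin 3 → ℝ), 1 + α * p.1 0 ≠ 0 →
      poissonBracket H (fun q => (1 / α + q.1 0) * q.2 0 + q.1 2 * q.2 2) p
        = 2 * H p) ∧
    -- (ii)  ∂F₂/∂t + {H, F₂} = 0  on the domain 1 + αx₁ ≠ 0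
    (∀ q : (Fin 3 → ℝ) × (Fin 3 → ℝ) × ℝ, 1 + α * q.1 0 ≠ 0 →
      fderiv ℝ (fun p : (Fin 3 → ℝ) × (Fin 3 → ℝ) × ℝ =>
          (1 / α + p.1 0) * p.2.1 0 + p.1 2 * p.2.1 2
            - 2 * p.2.2 * H (p.1, p.2.1)) q (0, 0, 1)
      + poissonBracketT (fun p => H (p.1, p.2.1))
          (fun p => (1 / α + p.1 0) * p.2.1 0 + p.1 2 * p.2.1 2
            - 2 * p.2.2 * H (p.1, p.2.1)) q = 0) ∧
    -- (iii)  {H, H} = 0 and {H, ψ₃} = 0  on the domain 1 + αx₁ ≠ 0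
    (∀ p : (Fin 3 → ℝ) × (Fin 3 → ℝ), 1 + α * p.1 0 ≠ 0 →
      poissonBracket H H p = 0 ∧ poissonBracket H (fun q => q.2 2) p = 0) := by
  have hHfun : H = fun q : FlatMartinetAux.E => (1 / 4 : ℝ) * ((q.2 0 + q.2 2 * (q.1 1) ^ 2) ^ 2
      + (q.2 1) ^ 2 / (1 + α * q.1 0) ^ 2) := funext hH
  refine ⟨?_, ?_, ?_⟩
  · intro p hp
    rw [hHfun, poissonBracket, Fin.sum_univ_three]
    simp only [FlatMartinetAux.fderivH p hp, FlatMartinetAux.fderivG]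
    simp [Pi.single_apply]
    field_simp
    ring
  · intro q hq
    have hH2 : (fun p : FlatMartinetAux.E' => H (p.1, p.2.1))
        = fun p : FlatMartinetAux.E' => (1 / 4 : ℝ) * ((p.2.1 0 + p.2.1 2 * (p.1 1) ^ 2) ^ 2
          + (p.2.1 1) ^ 2 / (1 + α * p.1 0) ^ 2) := funext fun p => hH _
    have hF2 : (fun p : FlatMartinetAux.E' => (1 / α + p.1 0) * p.2.1 0 + p.1 2 * p.2.1 2
          - 2 * p.2.2 * H (p.1, p.2.1))
        = fun p : FlatMartinetAux.E' => (1 / α + p.1 0) * p.2.1 0 + p.1 2 * p.2.1 2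
          - 2 * p.2.2 * ((1 / 4 : ℝ) * ((p.2.1 0 + p.2.1 2 * (p.1 1) ^ 2) ^ 2
            + (p.2.1 1) ^ 2 / (1 + α * p.1 0) ^ 2)) := funext fun p => by rw [hH]
    rw [hF2, poissonBracketT, hH2, Fin.sum_univ_three]
    simp only [FlatMartinetAux.fderivH' q hq, FlatMartinetAux.fderivF2 q hq]
    simp [Pi.single_apply]
    field_simp
    ring
  · intro p hp
    constructor
    · rw [poissonBracket]
      apply Finset.sum_eq_zero
      intro i _
      ring
    · have hg : fderiv ℝ (fun q : FlatMartinetAux.E => q.2 2) p = FlatMartinetAux.P 2 :=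
        (FlatMartinetAux.P 2).hasFDerivAt.fderiv
      rw [hHfun, poissonBracket, Fin.sum_univ_three]
      simp only [FlatMartinetAux.fderivH p hp, hg]
      simp [FlatMartinetAux.P, Pi.single_apply]
end

section
/- Let H : ℝ⁵×ℝ⁵ → ℝ be the true Hamiltonian of the sub-Riemannian nilpotent case (2,3,5) (the Cartan case α = β = 1), H(x,ψ) = ½[ ψ₁² + (ψ₂ + x₁ψ₃ + ½x₁²ψ₄ + x₁x₂ψ₅)² ], and let F(x,ψ) = −ψ₁ψ₅ + ψ₂ψ₄ − (ψ₃ + ½ψ₅x₂)x₂ψ₅. Then the five functions H, F, ψ₃, ψ₄, ψ₅ are pairwise in involution: {H,F} = 0, {H,ψ₃} = {H,ψ₄} = {H,ψ₅} = 0, {F,ψ₃} = {F,ψ₄} = {F,ψ₅} = 0, and {ψ_i,ψ_j} = 0 for i, j ∈ {3,4,5}, all identities holding on all of ℝ⁵×ℝ⁵. -/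
open Finset

/-- Coordinate projection `p ↦ p.1 i` as a continuous linear map. -/
noncomputable def Lx5 (i : Fin 5) : ((Fin 5 → ℝ) × (Fin 5 → ℝ)) →L[ℝ] ℝ :=
  (ContinuousLinearMap.proj i).comp (ContinuousLinearMap.fst ℝ (Fin 5 → ℝ) (Fin 5 → ℝ))

/-- Coordinate projection `p ↦ p.2 i` as a continuous linear map. -/
noncomputable def Lp5 (i : Fin 5) : ((Fin 5 → ℝ) × (Fin 5 → ℝ)) →L[ℝ] ℝ :=
  (ContinuousLinearMap.proj i).comp (ContinuousLinearMap.snd ℝ (Fin 5 → ℝ) (Fin 5 → ℝ))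

lemma Lx5_apply (i : Fin 5) (v : (Fin 5 → ℝ) × (Fin 5 → ℝ)) : Lx5 i v = v.1 i := rfl
lemma Lp5_apply (i : Fin 5) (v : (Fin 5 → ℝ) × (Fin 5 → ℝ)) : Lp5 i v = v.2 i := rfl

lemma hasX5 (i : Fin 5) (p : (Fin 5 → ℝ) × (Fin 5 → ℝ)) :
    HasFDerivAt (fun q : (Fin 5 → ℝ) × (Fin 5 → ℝ) => q.1 i) (Lx5 i) p :=
  (Lx5 i).hasFDerivAt

lemma hasP5 (i : Fin 5) (p : (Fin 5 → ℝ) × (Fin 5 → ℝ)) :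
    HasFDerivAt (fun q : (Fin 5 → ℝ) × (Fin 5 → ℝ) => q.2 i) (Lp5 i) p :=
  (Lp5 i).hasFDerivAt

lemma hasFDerivAt_sq' {E : Type*} [NormedAddCommGroup E] [NormedSpace ℝ E]
    {f : E → ℝ} {f' : E →L[ℝ] ℝ} {p : E} (h : HasFDerivAt f f' p) :
    HasFDerivAt (fun q => f q ^ 2) ((2 * f p) • f') p := by
  have h2 := h.fun_mul h
  have e : (fun q => f q * f q) = fun q => f q ^ 2 := funext fun q => (pow_two _).symm
  rw [e] at h2
  refine h2.congr_fderiv ?_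
  ext v
  simp [two_mul]
  ring

/-- The full differential of the Hamiltonian `H`, applied to a tangent vector. -/
lemma dH_apply (p v : (Fin 5 → ℝ) × (Fin 5 → ℝ)) :
    fderiv ℝ (fun p : (Fin 5 → ℝ) × (Fin 5 → ℝ) => (1 / 2) * ((p.2 0) ^ 2
        + (p.2 1 + p.1 0 * p.2 2 + (1 / 2) * (p.1 0) ^ 2 * p.2 3
            + p.1 0 * p.1 1 * p.2 4) ^ 2)) p v =
      p.2 0 * v.2 0 + (p.2 1 + p.1 0 * p.2 2 + (1 / 2) * (p.1 0) ^ 2 * p.2 3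
            + p.1 0 * p.1 1 * p.2 4) *
        (v.2 1 + (p.1 0 * v.2 2 + p.2 2 * v.1 0)
          + ((1/2 * p.1 0 ^ 2) * v.2 3 + p.2 3 * (p.1 0 * v.1 0))
          + ((p.1 0 * p.1 1) * v.2 4 + p.2 4 * (p.1 0 * v.1 1 + p.1 1 * v.1 0))) := by
  rw [(((hasFDerivAt_sq' (hasP5 0 p)).fun_add
      (hasFDerivAt_sq' ((((hasP5 1 p).fun_add ((hasX5 0 p).fun_mul (hasP5 2 p))).fun_add
          (((hasFDerivAt_sq' (hasX5 0 p)).const_mul ((1:ℝ)/2)).fun_mul (hasP5 3 p))).fun_add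
        (((hasX5 0 p).fun_mul (hasX5 1 p)).fun_mul (hasP5 4 p))))).const_mul ((1:ℝ)/2)).fderiv]
  simp only [ContinuousLinearMap.add_apply, ContinuousLinearMap.smul_apply,
    Lx5_apply, Lp5_apply, smul_eq_mul]
  ring

/-- The full differential of the first integral `F`, applied to a tangent vector. -/
lemma dF_apply (p v : (Fin 5 → ℝ) × (Fin 5 → ℝ)) :
    fderiv ℝ (fun p : (Fin 5 → ℝ) × (Fin 5 → ℝ) => - p.2 0 * p.2 4 + p.2 1 * p.2 3
        - (p.2 2 + (1 / 2) * p.2 4 * p.1 1) * p.1 1 * p.2 4) p v =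
      (- p.2 0 * v.2 4 + p.2 4 * (- v.2 0)) + (p.2 1 * v.2 3 + p.2 3 * v.2 1)
      - (((p.2 2 + 1/2 * p.2 4 * p.1 1) * p.1 1) * v.2 4
         + p.2 4 * ((p.2 2 + 1/2 * p.2 4 * p.1 1) * v.1 1
            + p.1 1 * (v.2 2 + (1/2 * p.2 4 * v.1 1 + p.1 1 * (1/2 * v.2 4))))) := by
  rw [(((((hasP5 0 p).fun_neg).fun_mul (hasP5 4 p)).fun_add ((hasP5 1 p).fun_mul (hasP5 3 p))).fun_sub
      ((((hasP5 2 p).fun_add (((hasP5 4 p).const_mul ((1:ℝ)/2)).fun_mul (hasX5 1 p))).fun_mul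
        (hasX5 1 p)).fun_mul (hasP5 4 p))).fderiv]
  simp only [ContinuousLinearMap.add_apply, ContinuousLinearMap.sub_apply,
    ContinuousLinearMap.smul_apply, ContinuousLinearMap.neg_apply,
    Lx5_apply, Lp5_apply, smul_eq_mul]

/-- The differential of the coordinate function `q ↦ ψ_j`. -/
lemma dP_apply (j : Fin 5) (p v : (Fin 5 → ℝ) × (Fin 5 → ℝ)) :
    fderiv ℝ (fun q : (Fin 5 → ℝ) × (Fin 5 → ℝ) => q.2 j) p v = v.2 j := by
  rw [(hasP5 j p).fderiv]; rfl

set_option maxHeartbeats 1000000 in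
/-- For the true Hamiltonian of the sub-Riemannian nilpotent case `(2,3,5)`
(the Cartan case), `H(x,ψ) = ½[ψ₁² + (ψ₂ + x₁ψ₃ + ½x₁²ψ₄ + x₁x₂ψ₅)²]`, the
five functions `H`, `F = −ψ₁ψ₅ + ψ₂ψ₄ − (ψ₃ + ½ψ₅x₂)x₂ψ₅`, `ψ₃`, `ψ₄`, `ψ₅`
are pairwise in involution on `ℝ⁵ × ℝ⁵`. -/
theorem sub_riemannian_235_involution
    (H F : (Fin 5 → ℝ) × (Fin 5 → ℝ) → ℝ)
    (hH : ∀ p : (Fin 5 → ℝ) × (Fin 5 → ℝ),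
      H p = (1 / 2) * ((p.2 0) ^ 2
        + (p.2 1 + p.1 0 * p.2 2 + (1 / 2) * (p.1 0) ^ 2 * p.2 3
            + p.1 0 * p.1 1 * p.2 4) ^ 2))
    (hF : ∀ p : (Fin 5 → ℝ) × (Fin 5 → ℝ),
      F p = - p.2 0 * p.2 4 + p.2 1 * p.2 3
        - (p.2 2 + (1 / 2) * p.2 4 * p.1 1) * p.1 1 * p.2 4) :
    (∀ p, poissonBracket H F p = 0) ∧
    (∀ p, poissonBracket H (fun q => q.2 2) p = 0) ∧
    (∀ p, poissonBracket H (fun q => q.2 3) p = 0) ∧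
    (∀ p, poissonBracket H (fun q => q.2 4) p = 0) ∧
    (∀ p, poissonBracket F (fun q => q.2 2) p = 0) ∧
    (∀ p, poissonBracket F (fun q => q.2 3) p = 0) ∧
    (∀ p, poissonBracket F (fun q => q.2 4) p = 0) ∧
    (∀ i ∈ ({2, 3, 4} : Set (Fin 5)), ∀ j ∈ ({2, 3, 4} : Set (Fin 5)),
      ∀ p : (Fin 5 → ℝ) × (Fin 5 → ℝ),
        poissonBracket (fun q : (Fin 5 → ℝ) × (Fin 5 → ℝ) => q.2 i)
          (fun q => q.2 j) p = 0) := by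
  have hHf : H = fun p => (1 / 2) * ((p.2 0) ^ 2
        + (p.2 1 + p.1 0 * p.2 2 + (1 / 2) * (p.1 0) ^ 2 * p.2 3
            + p.1 0 * p.1 1 * p.2 4) ^ 2) := funext hH
  have hFf : F = fun p => - p.2 0 * p.2 4 + p.2 1 * p.2 3
        - (p.2 2 + (1 / 2) * p.2 4 * p.1 1) * p.1 1 * p.2 4 := funext hF
  subst hHf hFf
  refine ⟨?_, ?_, ?_, ?_, ?_, ?_, ?_, ?_⟩
  · intro p
    rw [poissonBracket, Fin.sum_univ_five]
    simp only [dH_apply, dF_apply]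
    simp only [Pi.single_apply, Pi.zero_apply, Fin.reduceEq, reduceIte, if_true, if_false]
    ring
  · intro p
    rw [poissonBracket, Fin.sum_univ_five]
    simp only [dH_apply, dP_apply]
    simp only [Pi.single_apply, Pi.zero_apply, Fin.reduceEq, reduceIte, if_true, if_false]
    ring
  · intro p
    rw [poissonBracket, Fin.sum_univ_five]
    simp only [dH_apply, dP_apply]
    simp only [Pi.single_apply, Pi.zero_apply, Fin.reduceEq, reduceIte, if_true, if_false]
    ring
  · intro p
    rw [poissonBracket, Fin.sum_univ_five]
    simp only [dH_apply, dP_apply]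
    simp only [Pi.single_apply, Pi.zero_apply, Fin.reduceEq, reduceIte, if_true, if_false]
    ring
  · intro p
    rw [poissonBracket, Fin.sum_univ_five]
    simp only [dF_apply, dP_apply]
    simp only [Pi.single_apply, Pi.zero_apply, Fin.reduceEq, reduceIte, if_true, if_false]
    ring
  · intro p
    rw [poissonBracket, Fin.sum_univ_five]
    simp only [dF_apply, dP_apply]
    simp only [Pi.single_apply, Pi.zero_apply, Fin.reduceEq, reduceIte, if_true, if_false]
    ring
  · intro p
    rw [poissonBracket, Fin.sum_univ_five]
    simp only [dF_apply, dP_apply]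
    simp only [Pi.single_apply, Pi.zero_apply, Fin.reduceEq, reduceIte, if_true, if_false]
    ring
  · intro i _ j _ p
    rw [poissonBracket, Fin.sum_univ_five]
    simp only [dP_apply]
    simp
end
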